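/- arXiv:1909.09763 — 5 statements merged into one kernel-verified Lean document; each statement's English description precedes it below -/
import Mathlib

section
/- For every s ∈ [0,1) the equation x = s·φ(x) has a unique solution h(s) in [0,1] (so the minimal nonnegative solution is the only one). Moreover h(s)/s → q as s → 0+, and h(s) → 1 as s → 1−. -/
/-!
Since `∑ (n+1) p_n = 1`, the map `φ` is `1`-Lipschitz on `[0,1]`, so for `s < 1` the map
`x ↦ s φ(x)` is a contraction there and has at most one fixed point.

Near `s = 0`: a solution satisfies `h(s)/s = φ(h(s))` and `h(s) ≤ s`, and
`q ≤ φ(x) ≤ q + (1 - q) x`.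

Near `s = 1`: the two moment conditions give
`φ(x) - x = ∑ p_n (x^{n+1} - 1 - (n+1)(x-1)) ≥ N p_N (1-x)²` for every `N`, while a solution has
`φ(h) - h = (1-s) φ(h) ≤ 1 - s`. Choosing `N ≥ 1` with `p_N > 0` gives `(1-h(s))² = O(1-s)`.
-/

open MeasureTheory ProbabilityTheory Filter Topology

/-- `φ(s) = q + ∑_{n≥0} p_n s^{n+1}`. -/
noncomputable def phi (q : ℝ) (p : ℕ → ℝ) (s : ℝ) : ℝ :=
  q + ∑' n : ℕ, p n * s ^ (n + 1)

/-- `φ'(s) = ∑_{n≥0} (n+1) p_n s^n`. -/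
noncomputable def phiDeriv (p : ℕ → ℝ) (s : ℝ) : ℝ :=
  ∑' n : ℕ, (n + 1 : ℝ) * p n * s ^ n

/-- `h s` is the minimal nonnegative solution `x ∈ [0,1]` of `x = s * φ x`, for every
`s ∈ [0,1]`. -/
def IsMinimalSolution (φ : ℝ → ℝ) (h : ℝ → ℝ) : Prop :=
  ∀ s ∈ Set.Icc (0 : ℝ) 1, h s ∈ Set.Icc (0 : ℝ) 1 ∧ h s = s * φ (h s) ∧
    ∀ y ∈ Set.Icc (0 : ℝ) 1, y = s * φ y → h s ≤ y

open Set

section Phi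

variable {q : ℝ} {p : ℕ → ℝ} {x y : ℝ}

lemma summable_mul_pow_succ (hp : ∀ n, 0 ≤ p n) (hpsum : Summable p) (hx0 : 0 ≤ x)
    (hx1 : x ≤ 1) : Summable (fun n => p n * x ^ (n + 1)) :=
  hpsum.of_nonneg_of_le (fun n => mul_nonneg (hp n) (pow_nonneg hx0 _))
    fun n => mul_le_of_le_one_right (hp n) (pow_le_one₀ hx0 hx1)

lemma le_phi (hp : ∀ n, 0 ≤ p n) (hx0 : 0 ≤ x) : q ≤ phi q p x :=
  le_add_of_nonneg_right (tsum_nonneg fun n => mul_nonneg (hp n) (pow_nonneg hx0 _))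

lemma phi_le_add_tsum_mul (hp : ∀ n, 0 ≤ p n) (hpsum : Summable p) (hx0 : 0 ≤ x)
    (hx1 : x ≤ 1) : phi q p x ≤ q + (∑' n, p n) * x := by
  rw [phi, ← tsum_mul_right]
  refine add_le_add le_rfl (Summable.tsum_le_tsum (fun n => ?_)
    (summable_mul_pow_succ hp hpsum hx0 hx1) (hpsum.mul_right x))
  rw [pow_succ]
  exact mul_le_mul_of_nonneg_left (mul_le_of_le_one_left hx0 (pow_le_one₀ hx0 hx1)) (hp n)

lemma phi_le_one (hp : ∀ n, 0 ≤ p n) (hpsum : Summable p) (htotal : q + ∑' n, p n = 1)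
    (hx0 : 0 ≤ x) (hx1 : x ≤ 1) : phi q p x ≤ 1 :=
  calc phi q p x ≤ q + (∑' n, p n) * x := phi_le_add_tsum_mul hp hpsum hx0 hx1
    _ ≤ q + ∑' n, p n := by gcongr; exact mul_le_of_le_one_right (tsum_nonneg hp) hx1
    _ = 1 := htotal

lemma abs_phi_sub_phi_le (hp : ∀ n, 0 ≤ p n) (hpsum : Summable p)
    (hmoment : Summable (fun n : ℕ => (n + 1 : ℝ) * p n)) (hx : x ∈ Icc (0 : ℝ) 1)
    (hy : y ∈ Icc (0 : ℝ) 1) :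
    |phi q p x - phi q p y| ≤ (∑' n : ℕ, (n + 1 : ℝ) * p n) * |x - y| := by
  have hterm (n : ℕ) :
      ‖p n * x ^ (n + 1) - p n * y ^ (n + 1)‖ ≤ (n + 1 : ℝ) * p n * |x - y| := by
    have hmax : max |x| |y| ≤ 1 := by
      rw [abs_of_nonneg hx.1, abs_of_nonneg hy.1]; exact max_le hx.2 hy.2
    have hpow : |x ^ (n + 1) - y ^ (n + 1)| ≤ |x - y| * (n + 1 : ℕ) :=
      (abs_pow_sub_pow_le ..).trans
        (mul_le_of_le_one_right (by positivity) (pow_le_one₀ (by positivity) hmax))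
    rw [Real.norm_eq_abs, ← mul_sub, abs_mul, abs_of_nonneg (hp n)]
    calc p n * |x ^ (n + 1) - y ^ (n + 1)| ≤ p n * (|x - y| * (n + 1 : ℕ)) :=
          mul_le_mul_of_nonneg_left hpow (hp n)
      _ = (n + 1 : ℝ) * p n * |x - y| := by push_cast; ring
  rw [phi, phi, add_sub_add_left_eq_sub, ← Summable.tsum_sub
    (summable_mul_pow_succ hp hpsum hx.1 hx.2) (summable_mul_pow_succ hp hpsum hy.1 hy.2)]
  exact tsum_of_norm_bounded (hmoment.hasSum.mul_right _) hterm

lemma mul_sq_le_pow_succ_sub (hx : 0 ≤ x) (n : ℕ) :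
    n * (1 - x) ^ 2 ≤ x ^ (n + 1) - 1 - (n + 1) * (x - 1) := by
  induction n with
  | zero => simp
  | succ n ih =>
    have hstep : x * (n * (1 - x) ^ 2 + 1 + (n + 1) * (x - 1)) ≤ x ^ (n + 2) := by
      rw [pow_succ' x (n + 1)]; gcongr; linarith
    push_cast
    nlinarith [mul_nonneg (mul_nonneg hx (Nat.cast_nonneg n : (0 : ℝ) ≤ n)) (sq_nonneg (1 - x))]

lemma hasSum_phi_sub_self (hp : ∀ n, 0 ≤ p n) (hpsum : Summable p)
    (htotal : q + ∑' n, p n = 1) (hmoment : Summable (fun n : ℕ => (n + 1 : ℝ) * p n))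
    (hcrit : ∑' n : ℕ, (n + 1 : ℝ) * p n = 1) (hx0 : 0 ≤ x) (hx1 : x ≤ 1) :
    HasSum (fun n => p n * (x ^ (n + 1) - 1 - (n + 1) * (x - 1))) (phi q p x - x) := by
  have hsum := ((summable_mul_pow_succ hp hpsum hx0 hx1).hasSum.sub hpsum.hasSum).sub
    (hmoment.hasSum.mul_left (x - 1))
  rw [hcrit, show _ - _ - (x - 1) * 1 = phi q p x - x by unfold phi; linarith] at hsum
  have hterms : (fun n : ℕ => p n * x ^ (n + 1) - p n - (x - 1) * ((n + 1 : ℝ) * p n)) =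
      fun n => p n * (x ^ (n + 1) - 1 - (n + 1) * (x - 1)) := funext fun n => by ring
  rwa [hterms] at hsum

lemma mul_sq_le_phi_sub_self (hp : ∀ n, 0 ≤ p n) (hpsum : Summable p)
    (htotal : q + ∑' n, p n = 1) (hmoment : Summable (fun n : ℕ => (n + 1 : ℝ) * p n))
    (hcrit : ∑' n : ℕ, (n + 1 : ℝ) * p n = 1) (N : ℕ) (hx0 : 0 ≤ x) (hx1 : x ≤ 1) :
    N * p N * (1 - x) ^ 2 ≤ phi q p x - x := by
  have hsum := hasSum_phi_sub_self hp hpsum htotal hmoment hcrit hx0 hx1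
  rw [← hsum.tsum_eq]
  calc N * p N * (1 - x) ^ 2 = p N * (N * (1 - x) ^ 2) := by ring
    _ ≤ p N * (x ^ (N + 1) - 1 - (N + 1) * (x - 1)) :=
        mul_le_mul_of_nonneg_left (mul_sq_le_pow_succ_sub hx0 N) (hp N)
    _ ≤ _ := hsum.summable.le_tsum N fun n _ =>
        mul_nonneg (hp n) ((by positivity : (0 : ℝ) ≤ n * (1 - x) ^ 2).trans
          (mul_sq_le_pow_succ_sub hx0 n))

lemma exists_pos_mul_of_tsum_succ_mul_eq_one (hp : ∀ n, 0 ≤ p n) (hp0 : p 0 < 1)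
    (hcrit : ∑' n : ℕ, (n + 1 : ℝ) * p n = 1) : ∃ N : ℕ, 0 < N * p N := by
  by_contra! hcon
  have hzero (n : ℕ) (hn : n ≠ 0) : (n + 1 : ℝ) * p n = 0 := by
    have hpos : (0 : ℝ) < n := Nat.cast_pos.mpr (Nat.pos_of_ne_zero hn)
    rw [le_antisymm (nonpos_of_mul_nonpos_right (hcon n) hpos) (hp n), mul_zero]
  rw [tsum_eq_single 0 hzero] at hcrit
  norm_num at hcrit
  linarith

end Phi

lemma eq_of_eq_mul_of_abs_sub_le {f : ℝ → ℝ} {s x y : ℝ} (hs0 : 0 ≤ s) (hs1 : s < 1)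
    (hf : |f x - f y| ≤ |x - y|) (hx : x = s * f x) (hy : y = s * f y) : x = y := by
  have hcontr : |x - y| ≤ s * |x - y| := by
    calc |x - y| = |s * f x - s * f y| := by rw [← hx, ← hy]
      _ = s * |f x - f y| := by rw [← mul_sub, abs_mul, abs_of_nonneg hs0]
      _ ≤ s * |x - y| := by gcongr
  have habs : |x - y| = 0 := by nlinarith [abs_nonneg (x - y)]
  exact sub_eq_zero.mp (abs_eq_zero.mp habs)
section Solution

variable {q : ℝ} {p : ℕ → ℝ} {s x : ℝ}

lemma div_mem_Icc_of_eq_mul_phi (hp : ∀ n, 0 ≤ p n) (hpsum : Summable p)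
    (htotal : q + ∑' n, p n = 1) (hs : 0 < s) (hx : x ∈ Icc (0 : ℝ) 1)
    (hsol : x = s * phi q p x) : x / s ∈ Icc q (q + (∑' n, p n) * s) := by
  have hdiv : x / s = phi q p x := by rw [div_eq_iff hs.ne', mul_comm]; exact hsol
  have hxs : x ≤ s := by
    rw [hsol]; exact mul_le_of_le_one_right hs.le (phi_le_one hp hpsum htotal hx.1 hx.2)
  rw [hdiv]
  refine ⟨le_phi hp hx.1, (phi_le_add_tsum_mul hp hpsum hx.1 hx.2).trans ?_⟩
  gcongr
  exact tsum_nonneg hp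

lemma mul_sq_one_sub_le_of_eq_mul_phi (hp : ∀ n, 0 ≤ p n) (hpsum : Summable p)
    (htotal : q + ∑' n, p n = 1) (hmoment : Summable (fun n : ℕ => (n + 1 : ℝ) * p n))
    (hcrit : ∑' n : ℕ, (n + 1 : ℝ) * p n = 1) (N : ℕ) (hs : s ≤ 1) (hx : x ∈ Icc (0 : ℝ) 1)
    (hsol : x = s * phi q p x) : N * p N * (1 - x) ^ 2 ≤ 1 - s :=
  calc N * p N * (1 - x) ^ 2 ≤ phi q p x - x :=
        mul_sq_le_phi_sub_self hp hpsum htotal hmoment hcrit N hx.1 hx.2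
    _ = (1 - s) * phi q p x := by linarith
    _ ≤ 1 - s := mul_le_of_le_one_right (sub_nonneg.2 hs) (phi_le_one hp hpsum htotal hx.1 hx.2)

variable {h : ℝ → ℝ}

lemma tendsto_div_nhdsGT_zero_of_eq_mul_phi (hp : ∀ n, 0 ≤ p n) (hpsum : Summable p)
    (htotal : q + ∑' n, p n = 1)
    (hsol : ∀ s ∈ Ioo (0 : ℝ) 1, h s ∈ Icc (0 : ℝ) 1 ∧ h s = s * phi q p (h s)) :
    Tendsto (fun s => h s / s) (𝓝[>] 0) (𝓝 q) := by
  have hbounds : ∀ᶠ s in 𝓝[>] 0, h s / s ∈ Icc q (q + (∑' n, p n) * s) := by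
    filter_upwards [Ioo_mem_nhdsGT zero_lt_one] with s hs
    exact div_mem_Icc_of_eq_mul_phi hp hpsum htotal hs.1 (hsol s hs).1 (hsol s hs).2
  have hupper : Tendsto (fun s => q + (∑' n, p n) * s) (𝓝[>] 0) (𝓝 q) :=
    ((continuous_const.add (continuous_const.mul continuous_id)).tendsto' 0 q
      (by simp)).mono_left nhdsWithin_le_nhds
  exact tendsto_of_tendsto_of_tendsto_of_le_of_le' tendsto_const_nhds hupper
    (hbounds.mono fun _ hs => hs.1) (hbounds.mono fun _ hs => hs.2)

lemma tendsto_nhdsLT_one_of_eq_mul_phi (hp : ∀ n, 0 ≤ p n) (hpsum : Summable p)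
    (htotal : q + ∑' n, p n = 1) (hmoment : Summable (fun n : ℕ => (n + 1 : ℝ) * p n))
    (hcrit : ∑' n : ℕ, (n + 1 : ℝ) * p n = 1) {N : ℕ} (hN : 0 < N * p N)
    (hsol : ∀ s ∈ Ioo (0 : ℝ) 1, h s ∈ Icc (0 : ℝ) 1 ∧ h s = s * phi q p (h s)) :
    Tendsto h (𝓝[<] 1) (𝓝 1) := by
  have hbounds : ∀ᶠ s in 𝓝[<] 1, h s ∈ Icc (1 - √((1 - s) / (N * p N))) 1 := by
    filter_upwards [Ioo_mem_nhdsLT zero_lt_one] with s hs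
    obtain ⟨hmem, hfix⟩ := hsol s hs
    have hsq := mul_sq_one_sub_le_of_eq_mul_phi hp hpsum htotal hmoment hcrit N hs.2.le hmem hfix
    refine ⟨?_, hmem.2⟩
    rw [sub_le_comm, Real.le_sqrt (sub_nonneg.2 hmem.2) (div_nonneg (sub_nonneg.2 hs.2.le) hN.le),
      le_div_iff₀ hN, mul_comm]
    exact hsq
  have hlower : Tendsto (fun s => 1 - √((1 - s) / (N * p N))) (𝓝[<] 1) (𝓝 1) :=
    ((by fun_prop : Continuous fun s : ℝ => 1 - √((1 - s) / (N * p N))).tendsto' 1 1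
      (by simp)).mono_left nhdsWithin_le_nhds
  exact tendsto_of_tendsto_of_tendsto_of_le_of_le' hlower tendsto_const_nhds
    (hbounds.mono fun _ hs => hs.1) (hbounds.mono fun _ hs => hs.2)

end Solution

theorem h_unique_and_limits_general
    (q : ℝ) (p : ℕ → ℝ) (hp : ∀ n, 0 ≤ p n)
    (hpsum : Summable p) (htotal : q + ∑' n : ℕ, p n = 1) (hp0 : p 0 < 1)
    (hmoment : Summable (fun n : ℕ => (n + 1 : ℝ) * p n))
    (hcrit : ∑' n : ℕ, (n + 1 : ℝ) * p n = 1)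
    (h : ℝ → ℝ) (hmin : IsMinimalSolution (phi q p) h)
:
    (∀ s ∈ Set.Ico (0 : ℝ) 1, ∃! y, y ∈ Set.Icc (0 : ℝ) 1 ∧ y = s * phi q p y) ∧
    Tendsto (fun s => h s / s) (𝓝[>] (0 : ℝ)) (𝓝 q) ∧
    Tendsto h (𝓝[<] (1 : ℝ)) (𝓝 1) := by
  have hsol (s : ℝ) (hs : s ∈ Ioo (0 : ℝ) 1) :
      h s ∈ Icc (0 : ℝ) 1 ∧ h s = s * phi q p (h s) :=
    (hmin s (Ioo_subset_Icc_self hs)).imp_right And.left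
  obtain ⟨N, hN⟩ := exists_pos_mul_of_tsum_succ_mul_eq_one hp hp0 hcrit
  refine ⟨fun s hs => ?_, tendsto_div_nhdsGT_zero_of_eq_mul_phi hp hpsum htotal hsol,
    tendsto_nhdsLT_one_of_eq_mul_phi hp hpsum htotal hmoment hcrit hN hsol⟩
  obtain ⟨hmem, hfix, -⟩ := hmin s (Ico_subset_Icc_self hs)
  refine ⟨h s, ⟨hmem, hfix⟩, fun y ⟨hy, hyfix⟩ => ?_⟩
  have hlip := abs_phi_sub_phi_le (q := q) hp hpsum hmoment hy hmem
  rw [hcrit, one_mul] at hlip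
  exact eq_of_eq_mul_of_abs_sub_le hs.1 hs.2 hlip hyfix hfix

/-- Lemma 1(1): for `s ∈ [0,1)` the equation `x = s φ(x)` has a unique solution in `[0,1]`;
moreover `h(s)/s → q` as `s → 0+` and `h(s) → 1` as `s → 1−`. -/
theorem h_unique_and_limits
    (q : ℝ) (p : ℕ → ℝ) (hq : 0 < q) (hp : ∀ n, 0 ≤ p n)
    (hpsum : Summable p) (htotal : q + ∑' n : ℕ, p n = 1) (hp0 : p 0 < 1)
    (hmoment : Summable (fun n : ℕ => (n + 1 : ℝ) * p n))
    (hcrit : ∑' n : ℕ, (n + 1 : ℝ) * p n = 1)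
    (h : ℝ → ℝ) (hmin : IsMinimalSolution (phi q p) h)
:
    (∀ s ∈ Set.Ico (0 : ℝ) 1, ∃! y, y ∈ Set.Icc (0 : ℝ) 1 ∧ y = s * phi q p y) ∧
    Tendsto (fun s => h s / s) (𝓝[>] (0 : ℝ)) (𝓝 q) ∧
    Tendsto h (𝓝[<] (1 : ℝ)) (𝓝 1) :=
  h_unique_and_limits_general q p hp hpsum htotal hp0 hmoment hcrit h hmin
end

section
/- The function h is differentiable on (0,1), and for every s ∈ (0,1), h′(s) = φ(h(s))/(1 − s·φ′(h(s))) > 0. -/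
open MeasureTheory ProbabilityTheory Filter Topology

lemma phi_hasDerivAt (q : ℝ) (p : ℕ → ℝ) (hp : ∀ n, 0 ≤ p n)
    (hmoment : Summable (fun n : ℕ => (n + 1 : ℝ) * p n)) {x : ℝ}
    (hx : x ∈ Set.Ioo (-1 : ℝ) 1) : HasDerivAt (phi q p) (phiDeriv p x) x := by
  have hderivterm : ∀ (n : ℕ) (y : ℝ), y ∈ Set.Ioo (-1 : ℝ) 1 →
      HasDerivAt (fun z : ℝ => p n * z ^ (n + 1)) ((n + 1 : ℝ) * p n * y ^ n) y := by
    intro n y _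
    have := (hasDerivAt_pow (n + 1) y).const_mul (p n)
    refine this.congr_deriv ?_
    push_cast
    ring
  have hbound : ∀ (n : ℕ) (y : ℝ), y ∈ Set.Ioo (-1 : ℝ) 1 →
      ‖(n + 1 : ℝ) * p n * y ^ n‖ ≤ (n + 1 : ℝ) * p n := by
    intro n y hy
    rw [Real.norm_eq_abs, abs_mul, abs_mul]
    have h2 : |y| ^ n ≤ 1 := by
      apply pow_le_one₀ (abs_nonneg y)
      rw [abs_le]
      exact ⟨hy.1.le, hy.2.le⟩
    rw [abs_pow, abs_of_nonneg (hp n), abs_of_nonneg (by positivity : (0:ℝ) ≤ (n + 1 : ℝ))]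
    nlinarith [mul_nonneg (by positivity : (0:ℝ) ≤ (n+1:ℝ)) (hp n)]
  have hsum0 : Summable (fun n : ℕ => p n * (0 : ℝ) ^ (n + 1)) := by
    simpa using summable_zero
  have main := hasDerivAt_tsum_of_isPreconnected hmoment isOpen_Ioo
    (convex_Ioo (-1 : ℝ) 1).isPreconnected hderivterm hbound (by norm_num) hsum0 hx
  unfold phi phiDeriv
  exact main.const_add q

lemma key_ineq (q : ℝ) (p : ℕ → ℝ) (hp : ∀ n, 0 ≤ p n)
    (hpsum : Summable p) (htotal : q + ∑' n : ℕ, p n = 1)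
    (hmoment : Summable (fun n : ℕ => (n + 1 : ℝ) * p n))
    (hcrit : ∑' n : ℕ, (n + 1 : ℝ) * p n = 1)
    {x : ℝ} (hx0 : 0 ≤ x) (hx1 : x ≤ 1) :
    q * (1 - x) ≤ phi q p x - x * phiDeriv p x := by
  have heq : (fun n : ℕ => (n : ℝ) * p n) = fun n : ℕ => (n + 1 : ℝ) * p n - p n := by
    ext n; ring
  have hsumn : Summable (fun n : ℕ => (n : ℝ) * p n) := by
    rw [heq]; exact hmoment.sub hpsum
  have htsumn : ∑' n : ℕ, (n : ℝ) * p n = q := by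
    rw [heq, Summable.tsum_sub hmoment hpsum, hcrit]
    linarith
  have hS1 : Summable (fun n : ℕ => p n * x ^ (n + 1)) := by
    apply Summable.of_norm_bounded hpsum
    intro n
    rw [Real.norm_eq_abs, abs_mul, abs_pow, abs_of_nonneg (hp n), abs_of_nonneg hx0]
    nth_rewrite 2 [← mul_one (p n)]
    exact mul_le_mul_of_nonneg_left (pow_le_one₀ hx0 hx1) (hp n)
  have hS2 : Summable (fun n : ℕ => (n + 1 : ℝ) * p n * x ^ (n + 1)) := by
    apply Summable.of_norm_bounded hmoment
    intro n
    have hnn : (0:ℝ) ≤ ((n : ℝ) + 1) * p n := mul_nonneg (by positivity) (hp n)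
    rw [Real.norm_eq_abs, abs_mul, abs_pow, abs_of_nonneg hx0, abs_of_nonneg hnn]
    nth_rewrite 2 [← mul_one (((n:ℝ) + 1) * p n)]
    exact mul_le_mul_of_nonneg_left (pow_le_one₀ hx0 hx1) hnn
  have hS3 : Summable (fun n : ℕ => p n * x ^ (n + 1) + (n : ℝ) * p n * x) :=
    hS1.add (hsumn.mul_right x)
  have h1 : x * phiDeriv p x = ∑' n : ℕ, (n + 1 : ℝ) * p n * x ^ (n + 1) := by
    rw [phiDeriv, ← tsum_mul_left]
    congr 1; ext n; ring
  have hle : ∑' n : ℕ, (n + 1 : ℝ) * p n * x ^ (n + 1)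
      ≤ ∑' n : ℕ, (p n * x ^ (n + 1) + (n : ℝ) * p n * x) := by
    apply Summable.tsum_le_tsum _ hS2 hS3
    intro n
    have hpow : x ^ (n + 1) ≤ x := by
      calc x ^ (n + 1) ≤ x ^ 1 := pow_le_pow_of_le_one hx0 hx1 (by omega)
      _ = x := pow_one x
    have h3 : (n : ℝ) * p n * x ^ (n + 1) ≤ (n : ℝ) * p n * x :=
      mul_le_mul_of_nonneg_left hpow (mul_nonneg (Nat.cast_nonneg n) (hp n))
    nlinarith
  have hsplit : ∑' n : ℕ, (p n * x ^ (n + 1) + (n : ℝ) * p n * x)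
      = (phi q p x - q) + q * x := by
    rw [Summable.tsum_add hS1 (hsumn.mul_right x), tsum_mul_right, htsumn, phi]
    ring
  rw [hsplit] at hle
  rw [← h1] at hle
  linarith

/-- Lemma 1(2): `h` is differentiable on `(0,1)` with
`h'(s) = φ(h(s)) / (1 − s φ'(h(s))) > 0`. -/
theorem h_hasDerivAt
    (q : ℝ) (p : ℕ → ℝ) (hq : 0 < q) (hp : ∀ n, 0 ≤ p n)
    (hpsum : Summable p) (htotal : q + ∑' n : ℕ, p n = 1) (hp0 : p 0 < 1)
    (hmoment : Summable (fun n : ℕ => (n + 1 : ℝ) * p n))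
    (hcrit : ∑' n : ℕ, (n + 1 : ℝ) * p n = 1)
    (h : ℝ → ℝ) (hmin : IsMinimalSolution (phi q p) h)
:
    ∀ s ∈ Set.Ioo (0 : ℝ) 1,
      HasDerivAt h (phi q p (h s) / (1 - s * phiDeriv p (h s))) s ∧
      0 < phi q p (h s) / (1 - s * phiDeriv p (h s)) := by
  have hphipos : ∀ x : ℝ, 0 ≤ x → 0 < phi q p x := by
    intro x hx
    have : 0 ≤ ∑' n : ℕ, p n * x ^ (n + 1) :=
      tsum_nonneg (fun n => mul_nonneg (hp n) (pow_nonneg hx _))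
    unfold phi; linarith
  have hphione : phi q p 1 = 1 := by
    unfold phi; simp only [one_pow, mul_one]; exact htotal
  set F : ℝ → ℝ := fun x => x / phi q p x with hFdef
  have hFval : ∀ x ∈ Set.Icc (0 : ℝ) 1, F (h x) = x := by
    intro x hx
    obtain ⟨hmem, heq, -⟩ := hmin x hx
    have hpos := hphipos (h x) hmem.1
    show h x / phi q p (h x) = x
    rw [div_eq_iff hpos.ne']
    exact heq
  have hFd : ∀ x ∈ Set.Ico (0 : ℝ) 1,
      HasDerivAt F ((phi q p x - x * phiDeriv p x) / (phi q p x) ^ 2) x := by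
    intro x hx
    have hx' : x ∈ Set.Ioo (-1 : ℝ) 1 := ⟨by linarith [hx.1], hx.2⟩
    have hp' := phi_hasDerivAt q p hp hmoment hx'
    have := (hasDerivAt_id x).div hp' (hphipos x hx.1).ne'
    refine this.congr_deriv ?_
    simp only [id_eq]
    ring
  have hd_pos : ∀ x ∈ Set.Ioo (0 : ℝ) 1,
      0 < (phi q p x - x * phiDeriv p x) / (phi q p x) ^ 2 := by
    intro x hx
    have hk := key_ineq q p hp hpsum htotal hmoment hcrit hx.1.le hx.2.le
    have hA := hphipos x hx.1.le
    apply div_pos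
    · nlinarith [hx.2]
    · positivity
  have hFmono : StrictMonoOn F (Set.Ico (0 : ℝ) 1) := by
    apply strictMonoOn_of_deriv_pos (convex_Ico 0 1)
    · intro x hx
      exact (hFd x hx).continuousAt.continuousWithinAt
    · intro x hx
      rw [interior_Ico] at hx
      rw [(hFd x ⟨hx.1.le, hx.2⟩).deriv]
      exact hd_pos x hx
  have hfix : ∀ x ∈ Set.Ioo (0 : ℝ) 1, h x ∈ Set.Ico (0 : ℝ) 1 ∧ F (h x) = x := by
    intro x hx
    obtain ⟨hmem, heq, -⟩ := hmin x ⟨hx.1.le, hx.2.le⟩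
    have hlt : h x < 1 := by
      rcases lt_or_eq_of_le hmem.2 with h1 | h1
      · exact h1
      · rw [h1, hphione, mul_one] at heq
        exact absurd heq.symm (ne_of_lt hx.2)
    exact ⟨⟨hmem.1, hlt⟩, hFval x ⟨hx.1.le, hx.2.le⟩⟩
  intro s hs
  obtain ⟨hs0, hs1⟩ := hs
  obtain ⟨hmemhs, hFs⟩ := hfix s ⟨hs0, hs1⟩
  obtain ⟨-, hseq, -⟩ := hmin s ⟨hs0.le, hs1.le⟩
  have hhs_pos : 0 < h s := by
    rw [hseq]; exact mul_pos hs0 (hphipos _ hmemhs.1)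
  have hhs_lt1 : h s < 1 := hmemhs.2
  -- continuity of h at s
  have hcont : ContinuousAt h s := by
    rw [ContinuousAt, tendsto_order]
    constructor
    · intro a ha
      set a' := (max a 0 + h s) / 2 with ha'def
      have hmax0 : (0:ℝ) ≤ max a 0 := le_max_right _ _
      have hmaxlt : max a 0 < h s := max_lt ha hhs_pos
      have ha'0 : 0 ≤ a' := by rw [ha'def]; linarith
      have ha'lt : a' < h s := by rw [ha'def]; linarith
      have ha'mem : a' ∈ Set.Ico (0:ℝ) 1 := ⟨ha'0, lt_trans ha'lt hhs_lt1⟩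
      have hFa' : F a' < s := by
        rw [← hFs]
        exact hFmono ha'mem hmemhs ha'lt
      filter_upwards [Ioo_mem_nhds hFa' hs1] with x hx
      have hFa'0 : 0 ≤ F a' := div_nonneg ha'0 (hphipos a' ha'0).le
      have hx0 : 0 < x := lt_of_le_of_lt hFa'0 hx.1
      obtain ⟨hxmem, hxF⟩ := hfix x ⟨hx0, hx.2⟩
      have : a' < h x := by
        rw [← hFmono.lt_iff_lt ha'mem hxmem, hxF]
        exact hx.1
      have haa' : a ≤ max a 0 := le_max_left _ _
      linarith
    · intro b hb
      set b' := (h s + min b 1) / 2 with hb'def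
      have hminb : h s < min b 1 := lt_min hb hhs_lt1
      have hb'gt : h s < b' := by rw [hb'def]; linarith
      have hb'lt1 : b' < 1 := by
        have : min b 1 ≤ 1 := min_le_right _ _
        rw [hb'def]; linarith
      have hb'ltb : b' < b := by
        have : min b 1 ≤ b := min_le_left _ _
        rw [hb'def]; linarith
      have hb'mem : b' ∈ Set.Ico (0:ℝ) 1 := ⟨by rw [hb'def]; linarith [hmemhs.1], hb'lt1⟩
      have hFb' : s < F b' := by
        rw [← hFs]
        exact hFmono hmemhs hb'mem hb'gt
      filter_upwards [Ioo_mem_nhds hs0 (lt_min hFb' hs1)] with x hx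
      have hx1 : x < 1 := lt_of_lt_of_le hx.2 (min_le_right _ _)
      have hxFb' : x < F b' := lt_of_lt_of_le hx.2 (min_le_left _ _)
      obtain ⟨hxmem, hxF⟩ := hfix x ⟨hx.1, hx1⟩
      have : h x < b' := by
        rw [← hFmono.lt_iff_lt hxmem hb'mem, hxF]
        exact hxFb'
      linarith
  -- assemble
  have hA0 : 0 < phi q p (h s) := hphipos _ hmemhs.1
  have hN : 0 < phi q p (h s) - h s * phiDeriv p (h s) := by
    have hk := key_ineq q p hp hpsum htotal hmoment hcrit hmemhs.1 hhs_lt1.le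
    nlinarith [hhs_lt1]
  have hNA : phi q p (h s) - h s * phiDeriv p (h s)
      = phi q p (h s) * (1 - s * phiDeriv p (h s)) := by
    nth_rewrite 2 [hseq]
    ring
  have h1sB : 0 < 1 - s * phiDeriv p (h s) := by
    rw [hNA] at hN
    by_contra hcon
    push_neg at hcon
    nlinarith
  have hdne : (phi q p (h s) - h s * phiDeriv p (h s)) / (phi q p (h s)) ^ 2 ≠ 0 :=
    ne_of_gt (div_pos hN (by positivity))
  have hev : ∀ᶠ x in 𝓝 s, F (h x) = x := by
    filter_upwards [Ioo_mem_nhds hs0 hs1] with x hx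
    exact (hfix x hx).2
  have HD := HasDerivAt.of_local_left_inverse hcont (hFd (h s) hmemhs) hdne hev
  have hinv : ((phi q p (h s) - h s * phiDeriv p (h s)) / (phi q p (h s)) ^ 2)⁻¹
      = phi q p (h s) / (1 - s * phiDeriv p (h s)) := by
    rw [hNA, inv_div, pow_two, mul_div_mul_left _ _ hA0.ne']
  rw [hinv] at HD
  exact ⟨HD, div_pos hA0 h1sB⟩
end

section
/- Let T = inf{m ≥ 1 : S_m ≥ M_{m−1}} be the first weak ladder epoch. Then for every s ∈ (0,1), ∑_{n=1}^∞ s^n·P(T = n) = 1 + q·s − q·s/h(s). -/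
open MeasureTheory ProbabilityTheory Filter Topology

/-- `S_n = X_1 + ⋯ + X_n`. -/
def walkS {Ω : Type*} (X : ℕ → Ω → ℤ) (n : ℕ) (ω : Ω) : ℤ :=
  ∑ i ∈ Finset.range n, X (i + 1) ω

/-- `M_n = max_{0 ≤ k ≤ n} S_k`. -/
def walkM {Ω : Type*} (X : ℕ → Ω → ℤ) (n : ℕ) (ω : Ω) : ℤ :=
  (Finset.range (n + 1)).sup' Finset.nonempty_range_add_one (fun k => walkS X k ω)

/-- The weak record number `A_n = #{1 ≤ m ≤ n : S_m ≥ M_{m-1}}`. -/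
def recordNum {Ω : Type*} (X : ℕ → Ω → ℤ) (n : ℕ) (ω : Ω) : ℕ :=
  ((Finset.Icc 1 n).filter (fun m => walkM X (m - 1) ω ≤ walkS X m ω)).card

/-- The first weak ladder epoch `T = inf {m ≥ 1 : S_m ≥ M_{m-1}}` (with value `0` if the set
is empty). -/
noncomputable def ladderT {Ω : Type*} (X : ℕ → Ω → ℤ) (ω : Ω) : ℕ :=
  sInf {m : ℕ | 1 ≤ m ∧ walkM X (m - 1) ω ≤ walkS X m ω}

open ENNReal

namespace LPR

/-- Propositional indicator for `ℝ≥0∞`-valued sums (avoids decidability issues). -/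
noncomputable def I (P : Prop) (x : ℝ≥0∞) : ℝ≥0∞ := ⨆ _ : P, x

lemma I_pos {P : Prop} (h : P) (x : ℝ≥0∞) : I P x = x := by simp [I, h]

lemma I_neg {P : Prop} (h : ¬ P) (x : ℝ≥0∞) : I P x = 0 := by simp [I, h]

lemma I_congr {P Q : Prop} (h : P ↔ Q) (x : ℝ≥0∞) : I P x = I Q x := by simp [I, h]

lemma I_mul_left {P : Prop} (c x : ℝ≥0∞) : c * I P x = I P (c * x) := by
  by_cases h : P
  · rw [I_pos h, I_pos h]
  · rw [I_neg h, I_neg h, mul_zero]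

/-! ### Path combinatorics -/

noncomputable def w (q : ℝ) (p : ℕ → ℝ) (z : ℤ) : ℝ≥0∞ :=
  if z = 1 then ENNReal.ofReal q else if z ≤ 0 then ENNReal.ofReal (p (-z).toNat) else 0

def ps (l : List ℤ) (j : ℕ) : ℤ := (l.take j).sum

def Steps (l : List ℤ) : Prop := ∀ z ∈ l, z ≤ 1

def FPn (k : ℕ) (l : List ℤ) : Prop :=
  (∀ j < l.length, ps l j < (k : ℤ)) ∧ (k : ℤ) ≤ l.sum

def FP (k : ℕ) (l : List ℤ) : Prop := FPn k l ∧ Steps l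

def Tc (l : List ℤ) : Prop :=
  l ≠ [] ∧ (∀ j, 1 ≤ j → j < l.length → ps l j < 0) ∧ 0 ≤ l.sum

noncomputable def F (q : ℝ) (p : ℕ → ℝ) (σ : ℝ≥0∞) (l : List ℤ) : ℝ≥0∞ :=
  σ ^ l.length * (l.map (w q p)).prod

noncomputable def g (q : ℝ) (p : ℕ → ℝ) (σ : ℝ≥0∞) (k : ℕ) : ℝ≥0∞ :=
  ∑' l : List ℤ, I (FP k l) (F q p σ l)

noncomputable def gn (q : ℝ) (p : ℕ → ℝ) (σ : ℝ≥0∞) (k : ℕ) : ℝ≥0∞ :=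
  ∑' l : List ℤ, I (FPn k l) (F q p σ l)

/-! basic `ps` lemmas -/

@[simp] lemma ps_zero (l : List ℤ) : ps l 0 = 0 := by simp [ps]

lemma ps_succ (l : List ℤ) {j : ℕ} (h : j < l.length) :
    ps l (j + 1) = ps l j + l[j] := List.sum_take_succ l j h

@[simp] lemma ps_length (l : List ℤ) : ps l l.length = l.sum := by simp [ps]

lemma ps_nil (j : ℕ) : ps [] j = 0 := by simp [ps]

lemma ps_cons (z : ℤ) (t : List ℤ) (j : ℕ) : ps (z :: t) (j + 1) = z + ps t j := by
  simp [ps, List.take_succ_cons]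

lemma ps_add (l : List ℤ) (m j : ℕ) : ps l (m + j) = ps l m + ps (l.drop m) j := by
  simp [ps, List.take_add]

lemma ps_append_le (l₁ l₂ : List ℤ) {j : ℕ} (h : j ≤ l₁.length) :
    ps (l₁ ++ l₂) j = ps l₁ j := by
  simp [ps, List.take_append_of_le_length h]

lemma ps_append_right (l₁ l₂ : List ℤ) (j : ℕ) :
    ps (l₁ ++ l₂) (l₁.length + j) = l₁.sum + ps l₂ j := by
  rw [ps_add]
  congr 1
  · rw [ps, List.take_left']; rfl
  · rw [List.drop_left']; rfl

lemma ps_take (l : List ℤ) {m j : ℕ} (h : j ≤ m) : ps (l.take m) j = ps l j := by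
  simp [ps, List.take_take, Nat.min_eq_left h]

lemma ps_succ_le (l : List ℤ) {j : ℕ} (h : j < l.length) (hst : Steps l) :
    ps l (j + 1) ≤ ps l j + 1 := by
  rw [ps_succ l h]
  have : l[j] ≤ 1 := hst _ (List.getElem_mem h)
  omega

lemma FP_ne_nil {k : ℕ} (hk : 1 ≤ k) {l : List ℤ} (h : FPn k l) : l ≠ [] := by
  rintro rfl
  have := h.2
  simp at this
  omega

lemma sum_eq_of_FP {k : ℕ} (hk : 1 ≤ k) {l : List ℤ} (h : FP k l) : l.sum = (k : ℤ) := by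
  have hne := FP_ne_nil hk h.1
  have hlen : 1 ≤ l.length := List.length_pos_iff.mpr hne
  have h1 : ps l ((l.length - 1) + 1) ≤ ps l (l.length - 1) + 1 :=
    ps_succ_le l (by omega) h.2
  have h2 : ps l (l.length - 1) < (k : ℤ) := h.1.1 _ (by omega)
  have h3 : (l.length - 1) + 1 = l.length := by omega
  rw [h3, ps_length] at h1
  have := h.1.2
  omega

/-! ### the splitting equivalence -/
namespace LPR2
open LPR

noncomputable def hitIdx (l : List ℤ) : ℕ := sInf {j | 1 ≤ ps l j}

lemma hit_nonempty {k : ℕ} (hk : 1 ≤ k) {l : List ℤ} (h : FPn k l) :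
    {j | 1 ≤ ps l j}.Nonempty := by
  refine ⟨l.length, ?_⟩
  have := h.2
  simp only [Set.mem_setOf_eq, ps_length]
  omega

section hit
variable {k : ℕ} {l : List ℤ}

lemma hit_spec (hk : 1 ≤ k) (h : FP k l) : 1 ≤ ps l (hitIdx l) := Nat.sInf_mem (hit_nonempty hk h.1)

lemma hit_min {j : ℕ} (hj : j < hitIdx l) : ps l j ≤ 0 := by
  have := Nat.notMem_of_lt_sInf (s := {j | 1 ≤ ps l j}) hj
  simp only [Set.mem_setOf_eq] at this
  omega

lemma hit_pos (hk : 1 ≤ k) (h : FP k l) : 1 ≤ hitIdx l := by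
  by_contra hc
  have h0 : hitIdx l = 0 := by omega
  have := hit_spec hk h
  rw [h0, ps_zero] at this
  omega

lemma hit_le_length (hk : 1 ≤ k) (h : FP k l) : hitIdx l ≤ l.length := by
  refine Nat.sInf_le ?_
  have := h.1.2
  simp only [Set.mem_setOf_eq, ps_length]
  omega

lemma hit_ps_eq (hk : 1 ≤ k) (h : FP k l) : ps l (hitIdx l) = 1 := by
  have h1 := hit_spec hk h
  have hm1 := hit_pos hk h
  have hml := hit_le_length hk h
  have h2 : ps l ((hitIdx l - 1) + 1) ≤ ps l (hitIdx l - 1) + 1 :=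
    ps_succ_le l (by omega) h.2
  have h3 : ps l (hitIdx l - 1) ≤ 0 := hit_min (by omega)
  have h4 : (hitIdx l - 1) + 1 = hitIdx l := by omega
  rw [h4] at h2
  omega

lemma hit_lt_length (hk2 : 2 ≤ k) (h : FP k l) : hitIdx l < l.length := by
  have h1 := hit_le_length (by omega : 1 ≤ k) h
  rcases lt_or_eq_of_le h1 with h' | h'
  · exact h'
  · exfalso
    have := hit_ps_eq (by omega : 1 ≤ k) h
    rw [h', ps_length] at this
    have := h.1.2
    omega

end hit

lemma FP_take {k : ℕ} (hk : 1 ≤ k) {l : List ℤ} (h : FP (k + 1) l) :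
    FP 1 (l.take (hitIdx l)) := by
  have hk1 : 1 ≤ k + 1 := by omega
  have hml := hit_le_length hk1 h
  have hlen : (l.take (hitIdx l)).length = hitIdx l := by
    simp [List.length_take, Nat.min_eq_left hml]
  refine ⟨⟨?_, ?_⟩, ?_⟩
  · intro j hj
    rw [hlen] at hj
    rw [ps_take l hj.le]
    have := hit_min (l := l) hj
    omega
  · have : (l.take (hitIdx l)).sum = ps l (hitIdx l) := by
      rw [← ps_length, hlen, ps_take l le_rfl]
    rw [this, hit_ps_eq hk1 h]
    norm_num
  · intro z hz
    exact h.2 z (List.mem_of_mem_take hz)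

lemma FP_drop {k : ℕ} (hk : 1 ≤ k) {l : List ℤ} (h : FP (k + 1) l) :
    FP k (l.drop (hitIdx l)) := by
  have hk1 : 1 ≤ k + 1 := by omega
  have hmlt : hitIdx l < l.length := hit_lt_length (by omega) h
  have hlen : (l.drop (hitIdx l)).length = l.length - hitIdx l := by simp
  have hps : ∀ j, ps (l.drop (hitIdx l)) j = ps l (hitIdx l + j) - 1 := by
    intro j
    have := ps_add l (hitIdx l) j
    rw [hit_ps_eq hk1 h] at this
    omega
  refine ⟨⟨?_, ?_⟩, ?_⟩
  · intro j hj
    rw [hlen] at hj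
    rw [hps]
    have := h.1.1 (hitIdx l + j) (by omega)
    push_cast
    omega
  · have : (l.drop (hitIdx l)).sum = ps (l.drop (hitIdx l)) (l.length - hitIdx l) := by
      rw [← hlen, ps_length]
    rw [this, hps]
    have h2 : hitIdx l + (l.length - hitIdx l) = l.length := by omega
    rw [h2, ps_length]
    have := h.1.2
    push_cast
    omega
  · intro z hz
    exact h.2 z (List.mem_of_mem_drop hz)

lemma FP_append {k : ℕ} (hk : 1 ≤ k) {l₁ l₂ : List ℤ} (h1 : FP 1 l₁) (h2 : FP k l₂) :
    FP (k + 1) (l₁ ++ l₂) := by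
  have hs1 : l₁.sum = 1 := sum_eq_of_FP le_rfl h1
  refine ⟨⟨?_, ?_⟩, ?_⟩
  · intro j hj
    rw [List.length_append] at hj
    rcases le_or_gt j l₁.length with hle | hgt
    · rw [ps_append_le _ _ hle]
      rcases lt_or_eq_of_le hle with h' | h'
      · have := h1.1.1 j h'
        push_cast
        omega
      · rw [h', ps_length, hs1]
        push_cast
        omega
    · have hj' : j = l₁.length + (j - l₁.length) := by omega
      rw [hj', ps_append_right, hs1]
      have := h2.1.1 (j - l₁.length) (by omega)
      push_cast
      omega
  · rw [List.sum_append, hs1]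
    have := h2.1.2
    push_cast
    omega
  · intro z hz
    rcases List.mem_append.mp hz with h' | h'
    exacts [h1.2 z h', h2.2 z h']

lemma hit_append {k : ℕ} (hk : 1 ≤ k) {l₁ l₂ : List ℤ} (h1 : FP 1 l₁) (h2 : FP k l₂) :
    hitIdx (l₁ ++ l₂) = l₁.length := by
  have hs1 : l₁.sum = 1 := sum_eq_of_FP le_rfl h1
  apply le_antisymm
  · apply Nat.sInf_le
    simp only [Set.mem_setOf_eq]
    rw [ps_append_le _ _ le_rfl, ps_length, hs1]
  · by_contra hc
    push_neg at hc
    have hmem : 1 ≤ ps (l₁ ++ l₂) (hitIdx (l₁ ++ l₂)) :=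
      hit_spec (by omega : 1 ≤ k + 1) (FP_append hk h1 h2)
    rw [ps_append_le _ _ hc.le] at hmem
    have := h1.1.1 _ hc
    omega

noncomputable def fpSplit (k : ℕ) (hk : 1 ≤ k) :
    ({l : List ℤ // FP 1 l} × {l : List ℤ // FP k l}) ≃ {l : List ℤ // FP (k + 1) l} where
  toFun x := ⟨x.1.1 ++ x.2.1, FP_append hk x.1.2 x.2.2⟩
  invFun y := (⟨y.1.take (hitIdx y.1), FP_take hk y.2⟩, ⟨y.1.drop (hitIdx y.1), FP_drop hk y.2⟩)
  left_inv := by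
    rintro ⟨⟨l₁, h1⟩, ⟨l₂, h2⟩⟩
    have := hit_append hk h1 h2
    simp only [Prod.mk.injEq, Subtype.mk.injEq, this]
    exact ⟨List.take_left' rfl, List.drop_left' rfl⟩
  right_inv := by
    rintro ⟨l, hl⟩
    simp only [Subtype.mk.injEq]
    exact List.take_append_drop _ l

end LPR2
/-! ### tsum machinery -/
open LPR2

lemma tsum_I_subtype {α : Type*} (P : α → Prop) (f : α → ℝ≥0∞) :
    ∑' l : α, I (P l) (f l) = ∑' x : {l : α // P l}, f x.1 := by
  have h1 : ∑' l : α, I (P l) (f l) = ∑' l : α, Set.indicator {l | P l} f l := by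
    apply tsum_congr
    intro l
    by_cases h : P l
    · rw [I_pos h]; exact (Set.indicator_of_mem h f).symm
    · rw [I_neg h]; exact (Set.indicator_of_notMem h f).symm
  rw [h1]
  exact (tsum_subtype {l : α | P l} f).symm

lemma F_append (q : ℝ) (p : ℕ → ℝ) (σ : ℝ≥0∞) (l₁ l₂ : List ℤ) :
    F q p σ (l₁ ++ l₂) = F q p σ l₁ * F q p σ l₂ := by
  simp [F, pow_add]
  ring

lemma F_cons (q : ℝ) (p : ℕ → ℝ) (σ : ℝ≥0∞) (z : ℤ) (t : List ℤ) :
    F q p σ (z :: t) = σ * w q p z * F q p σ t := by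
  simp [F, pow_succ]
  ring

@[simp] lemma F_nil (q : ℝ) (p : ℕ → ℝ) (σ : ℝ≥0∞) : F q p σ ([] : List ℤ) = 1 := by simp [F]

lemma g_zero (q : ℝ) (p : ℕ → ℝ) (σ : ℝ≥0∞) : g q p σ 0 = 1 := by
  rw [g, tsum_eq_single ([] : List ℤ)]
  · rw [I_pos, F_nil]
    exact ⟨⟨by intro j hj; simp at hj, by simp⟩, by intro z hz; simp at hz⟩
  · intro l hl
    apply I_neg
    rintro ⟨⟨h1, -⟩, -⟩
    have : 0 < l.length := List.length_pos_iff.mpr hl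
    have := h1 0 this
    simp at this

lemma g_succ (q : ℝ) (p : ℕ → ℝ) (σ : ℝ≥0∞) {k : ℕ} (hk : 1 ≤ k) :
    g q p σ (k + 1) = g q p σ 1 * g q p σ k := by
  rw [g, g, g, tsum_I_subtype, tsum_I_subtype, tsum_I_subtype,
    ← Equiv.tsum_eq (fpSplit k hk) (fun x : {l : List ℤ // FP (k+1) l} => F q p σ x.1)]
  calc ∑' x : {l : List ℤ // FP 1 l} × {l : List ℤ // FP k l},
        F q p σ ((fpSplit k hk) x).1
      = ∑' x : {l : List ℤ // FP 1 l} × {l : List ℤ // FP k l},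
          F q p σ x.1.1 * F q p σ x.2.1 := by
        apply tsum_congr
        rintro ⟨⟨l₁, h1⟩, ⟨l₂, h2⟩⟩
        exact F_append q p σ l₁ l₂
    _ = ∑' a : {l : List ℤ // FP 1 l}, ∑' b : {l : List ℤ // FP k l},
          F q p σ a.1 * F q p σ b.1 :=
        ENNReal.tsum_prod (f := fun (a : {l : List ℤ // FP 1 l}) (b : {l : List ℤ // FP k l}) => F q p σ a.1 * F q p σ b.1)
    _ = ∑' a : {l : List ℤ // FP 1 l}, F q p σ a.1 * ∑' b : {l : List ℤ // FP k l},
          F q p σ b.1 := tsum_congr fun a => ENNReal.tsum_mul_left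
    _ = (∑' a : {l : List ℤ // FP 1 l}, F q p σ a.1) *
          ∑' b : {l : List ℤ // FP k l}, F q p σ b.1 := ENNReal.tsum_mul_right

lemma g_pow (q : ℝ) (p : ℕ → ℝ) (σ : ℝ≥0∞) (k : ℕ) : g q p σ k = (g q p σ 1) ^ k := by
  induction k with
  | zero => simpa using g_zero q p σ
  | succ k ih =>
    rcases Nat.eq_zero_or_pos k with rfl | hk
    · simp
    · rw [g_succ q p σ hk, ih, pow_succ]
      ring

/-! ### decomposition by the first step -/

def consEquiv : ℤ × List ℤ ≃ ↥{l : List ℤ | l ≠ []} where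
  toFun zt := ⟨zt.1 :: zt.2, by simp⟩
  invFun l := (l.1.head l.2, l.1.tail)
  left_inv := by rintro ⟨z, t⟩; simp
  right_inv := by
    rintro ⟨l, hl⟩
    cases l with
    | nil => exact absurd rfl hl
    | cons z t => simp

lemma tsum_list_cons (f : List ℤ → ℝ≥0∞) (h0 : f [] = 0) :
    ∑' l : List ℤ, f l = ∑' zt : ℤ × List ℤ, f (zt.1 :: zt.2) := by
  have hc : ∑' x : ↥({l : List ℤ | l ≠ []}ᶜ), f x.1 = 0 := by
    convert tsum_zero with x
    have hx : ¬ x.1 ≠ [] := x.2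
    rw [not_not.mp hx, h0]
  have hs := Summable.tsum_add_tsum_compl (f := f) (s := {l : List ℤ | l ≠ []})
    ENNReal.summable ENNReal.summable
  rw [← hs, hc, add_zero, ← Equiv.tsum_eq consEquiv (fun x : ↥{l : List ℤ | l ≠ []} => f x.1)]
  rfl

lemma tsum_int_split (f : ℤ → ℝ≥0∞) (h2 : ∀ z : ℤ, 2 ≤ z → f z = 0) :
    ∑' z : ℤ, f z = f 1 + ∑' k : ℕ, f (-(k : ℤ)) := by
  have hs := Summable.tsum_add_tsum_compl (f := f) (s := ({1} : Set ℤ))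
    ENNReal.summable ENNReal.summable
  rw [← hs]
  congr 1
  · exact tsum_singleton 1 f
  · have hinj : Function.Injective
        (fun k : ℕ => (⟨-(k : ℤ), by simp only [Set.mem_compl_iff, Set.mem_singleton_iff]; omega⟩ : ↥(({1} : Set ℤ)ᶜ))) := by
      intro a b hab
      have := congrArg Subtype.val hab
      simp only at this
      omega
    rw [← Function.Injective.tsum_eq hinj
      (f := fun x : ↥(({1} : Set ℤ)ᶜ) => f x.1) ?_]
    · intro x hx
      simp only [Function.mem_support, ne_eq] at hx
      rcases le_or_gt x.1 0 with h' | h'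
      · refine ⟨(-x.1).toNat, ?_⟩
        apply Subtype.ext
        simp only
        omega
      · exfalso
        apply hx
        have hne : x.1 ≠ 1 := x.2
        exact h2 x.1 (by omega)

lemma w_one (q : ℝ) (p : ℕ → ℝ) : w q p 1 = ENNReal.ofReal q := by simp [w]

lemma w_neg (q : ℝ) (p : ℕ → ℝ) (k : ℕ) : w q p (-(k : ℤ)) = ENNReal.ofReal (p k) := by
  simp only [w]
  rw [if_neg (by omega), if_pos (by omega), neg_neg]
  norm_num

lemma w_two (q : ℝ) (p : ℕ → ℝ) {z : ℤ} (hz : 2 ≤ z) : w q p z = 0 := by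
  simp only [w]
  rw [if_neg (by omega), if_neg (by omega)]

lemma F_eq_zero_of_not_steps (q : ℝ) (p : ℕ → ℝ) (σ : ℝ≥0∞) {l : List ℤ}
    (h : ¬ Steps l) : F q p σ l = 0 := by
  simp only [Steps, not_forall] at h
  obtain ⟨z, hz, hz2⟩ := h
  have : (0 : ℝ≥0∞) ∈ l.map (w q p) := by
    refine List.mem_map.mpr ⟨z, hz, ?_⟩
    exact w_two q p (show (2:ℤ) ≤ z by omega)
  rw [F, List.prod_eq_zero this, mul_zero]

lemma gn_eq_g (q : ℝ) (p : ℕ → ℝ) (σ : ℝ≥0∞) (k : ℕ) : gn q p σ k = g q p σ k := by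
  apply tsum_congr
  intro l
  by_cases h1 : FPn k l
  · by_cases h2 : Steps l
    · rw [I_pos h1, I_pos (P := FP k l) ⟨h1, h2⟩]
    · rw [I_pos h1, I_neg (P := FP k l) (fun h => h2 h.2), F_eq_zero_of_not_steps q p σ h2]
  · rw [I_neg h1, I_neg (P := FP k l) (fun h => h1 h.1)]

/-! ### head classification -/

lemma FP_one_cons_one (t : List ℤ) : FP 1 ((1 : ℤ) :: t) ↔ t = [] := by
  constructor
  · rintro ⟨⟨h1, -⟩, -⟩
    by_contra ht
    have hlen : 0 < t.length := List.length_pos_iff.mpr ht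
    have h2 := h1 1 (by simp only [List.length_cons]; omega)
    rw [ps_cons] at h2
    rw [ps_zero] at h2
    omega
  · rintro rfl
    refine ⟨⟨?_, by simp⟩, ?_⟩
    · intro j hj
      simp only [List.length_cons, List.length_nil] at hj
      have hj0 : j = 0 := by omega
      subst hj0
      simp
    · intro z hz
      simp only [List.mem_singleton] at hz
      omega

lemma FP_one_cons_neg (k : ℕ) (t : List ℤ) : FP 1 ((-(k : ℤ)) :: t) ↔ FP (k + 1) t := by
  constructor
  · rintro ⟨⟨h1, h2⟩, h3⟩
    refine ⟨⟨?_, ?_⟩, ?_⟩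
    · intro j hj
      have := h1 (j + 1) (by simp only [List.length_cons]; omega)
      rw [ps_cons] at this
      push_cast
      omega
    · simp only [List.sum_cons] at h2
      push_cast
      omega
    · intro z hz
      exact h3 z (by simp [hz])
  · rintro ⟨⟨h1, h2⟩, h3⟩
    refine ⟨⟨?_, ?_⟩, ?_⟩
    · intro j hj
      cases j with
      | zero => simp
      | succ j =>
        rw [ps_cons]
        have := h1 j (by simp only [List.length_cons] at hj; omega)
        push_cast at this ⊢
        omega
    · simp only [List.sum_cons]
      push_cast at h2 ⊢
      omega
    · intro z hz
      rcases List.mem_cons.mp hz with rfl | h'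
      · omega
      · exact h3 z h'

lemma Tc_cons_one (t : List ℤ) : Tc ((1 : ℤ) :: t) ↔ t = [] := by
  constructor
  · rintro ⟨-, h1, -⟩
    by_contra ht
    have hlen : 0 < t.length := List.length_pos_iff.mpr ht
    have h2 := h1 1 le_rfl (by simp only [List.length_cons]; omega)
    rw [ps_cons, ps_zero] at h2
    omega
  · rintro rfl
    refine ⟨by simp, ?_, by simp⟩
    intro j hj1 hj2
    simp only [List.length_cons, List.length_nil] at hj2
    omega

lemma Tc_cons_neg (k : ℕ) (t : List ℤ) : Tc ((-(k : ℤ)) :: t) ↔ FPn k t := by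
  constructor
  · rintro ⟨-, h1, h2⟩
    refine ⟨?_, ?_⟩
    · intro j hj
      have := h1 (j + 1) (by omega) (by simp only [List.length_cons]; omega)
      rw [ps_cons] at this
      omega
    · simp only [List.sum_cons] at h2
      omega
  · rintro ⟨h1, h2⟩
    refine ⟨by simp, ?_, ?_⟩
    · intro j hj1 hj2
      obtain ⟨i, rfl⟩ : ∃ i, j = i + 1 := ⟨j - 1, by omega⟩
      rw [ps_cons]
      have := h1 i (by simp only [List.length_cons] at hj2; omega)
      omega
    · simp only [List.sum_cons]
      omega

/-! ### the two head-decomposition sums -/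

lemma tsum_g_one (q : ℝ) (p : ℕ → ℝ) (σ : ℝ≥0∞) :
    g q p σ 1 = σ * ENNReal.ofReal q +
      ∑' k : ℕ, σ * ENNReal.ofReal (p k) * g q p σ (k + 1) := by
  have h0 : I (FP 1 ([] : List ℤ)) (F q p σ ([] : List ℤ)) = 0 := by
    apply I_neg
    rintro ⟨⟨-, h2⟩, -⟩
    simp only [List.sum_nil] at h2
    omega
  calc g q p σ 1
      = ∑' zt : ℤ × List ℤ, I (FP 1 (zt.1 :: zt.2)) (F q p σ (zt.1 :: zt.2)) := by
        rw [g]; exact tsum_list_cons _ h0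
    _ = ∑' z : ℤ, ∑' t : List ℤ, I (FP 1 (z :: t)) (F q p σ (z :: t)) :=
        ENNReal.tsum_prod (f := fun (z : ℤ) (t : List ℤ) => I (FP 1 (z :: t)) (F q p σ (z :: t)))
    _ = σ * ENNReal.ofReal q +
          ∑' k : ℕ, σ * ENNReal.ofReal (p k) * g q p σ (k + 1) := by
        rw [tsum_int_split (fun z => ∑' t : List ℤ, I (FP 1 (z :: t)) (F q p σ (z :: t))) ?side]
        case side =>
          intro z hz
          convert tsum_zero with t
          by_cases hc : FP 1 (z :: t)
          · rw [I_pos hc, F_cons, w_two q p hz, mul_zero, zero_mul]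
          · exact I_neg hc _
        congr 1
        · rw [tsum_eq_single ([] : List ℤ)]
          · rw [I_pos ((FP_one_cons_one []).mpr rfl), F_cons, F_nil, w_one, mul_one]
          · intro t ht
            exact I_neg (fun hc => ht ((FP_one_cons_one t).mp hc)) _
        · apply tsum_congr
          intro k
          calc ∑' t : List ℤ, I (FP 1 ((-(k:ℤ)) :: t)) (F q p σ ((-(k:ℤ)) :: t))
              = ∑' t : List ℤ, σ * ENNReal.ofReal (p k) *
                  I (FP (k + 1) t) (F q p σ t) := by
                apply tsum_congr
                intro t
                rw [I_congr (FP_one_cons_neg k t), I_mul_left]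
                by_cases hc : FP (k + 1) t
                · rw [I_pos hc, I_pos hc, F_cons, w_neg]
                · rw [I_neg hc, I_neg hc]
            _ = σ * ENNReal.ofReal (p k) * g q p σ (k + 1) := by
                rw [ENNReal.tsum_mul_left, g]

lemma tsum_Tc (q : ℝ) (p : ℕ → ℝ) (σ : ℝ≥0∞) :
    (∑' l : List ℤ, I (Tc l) (F q p σ l)) = σ * ENNReal.ofReal q +
      ∑' k : ℕ, σ * ENNReal.ofReal (p k) * gn q p σ k := by
  have h0 : I (Tc ([] : List ℤ)) (F q p σ ([] : List ℤ)) = 0 := I_neg (fun h => h.1 rfl) _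
  calc (∑' l : List ℤ, I (Tc l) (F q p σ l))
      = ∑' zt : ℤ × List ℤ, I (Tc (zt.1 :: zt.2)) (F q p σ (zt.1 :: zt.2)) :=
        tsum_list_cons _ h0
    _ = ∑' z : ℤ, ∑' t : List ℤ, I (Tc (z :: t)) (F q p σ (z :: t)) :=
        ENNReal.tsum_prod (f := fun (z : ℤ) (t : List ℤ) => I (Tc (z :: t)) (F q p σ (z :: t)))
    _ = σ * ENNReal.ofReal q + ∑' k : ℕ, σ * ENNReal.ofReal (p k) * gn q p σ k := by
        rw [tsum_int_split (fun z => ∑' t : List ℤ, I (Tc (z :: t)) (F q p σ (z :: t))) ?side]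
        case side =>
          intro z hz
          convert tsum_zero with t
          by_cases hc : Tc (z :: t)
          · rw [I_pos hc, F_cons, w_two q p hz, mul_zero, zero_mul]
          · exact I_neg hc _
        congr 1
        · rw [tsum_eq_single ([] : List ℤ)]
          · rw [I_pos ((Tc_cons_one []).mpr rfl), F_cons, F_nil, w_one, mul_one]
          · intro t ht
            exact I_neg (fun hc => ht ((Tc_cons_one t).mp hc)) _
        · apply tsum_congr
          intro k
          calc ∑' t : List ℤ, I (Tc ((-(k:ℤ)) :: t)) (F q p σ ((-(k:ℤ)) :: t))
              = ∑' t : List ℤ, σ * ENNReal.ofReal (p k) *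
                  I (FPn k t) (F q p σ t) := by
                apply tsum_congr
                intro t
                rw [I_congr (Tc_cons_neg k t), I_mul_left]
                by_cases hc : FPn k t
                · rw [I_pos hc, I_pos hc, F_cons, w_neg]
                · rw [I_neg hc, I_neg hc]
            _ = σ * ENNReal.ofReal (p k) * gn q p σ k := by
                rw [ENNReal.tsum_mul_left, gn]

lemma tsum_list_eq_sigma (f : List ℤ → ℝ≥0∞) :
    ∑' l : List ℤ, f l = ∑' n : ℕ, ∑' x : Fin n → ℤ, f (List.ofFn x) := by
  rw [← Equiv.tsum_eq List.equivSigmaTuple.symm f]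
  exact ENNReal.tsum_sigma' (fun c => f (List.equivSigmaTuple.symm c))
/-! ### real analysis: uniqueness of the fixed point -/

lemma pow_sub_le_real {a b : ℝ} (n : ℕ) (ha : 0 ≤ a) (hab : a ≤ b) (hb : b ≤ 1) :
    b ^ n - a ^ n ≤ n * (b - a) := by
  induction n with
  | zero => simp
  | succ n ih =>
    have hb0 : 0 ≤ b := le_trans ha hab
    have h1 : b ^ (n + 1) - a ^ (n + 1) = b * (b ^ n - a ^ n) + (b - a) * a ^ n := by ring
    have h2 : b * (b ^ n - a ^ n) ≤ 1 * (n * (b - a)) := by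
      apply mul_le_mul hb ih ?_ (by norm_num)
      have := pow_le_pow_left₀ ha hab n
      linarith
    have h3 : (b - a) * a ^ n ≤ (b - a) * 1 := by
      apply mul_le_mul_of_nonneg_left ?_ (by linarith)
      exact pow_le_one₀ ha (le_trans hab hb)
    push_cast
    nlinarith

lemma summable_pow_mul (p : ℕ → ℝ) (hp : ∀ n, 0 ≤ p n) (hpsum : Summable p)
    {x : ℝ} (hx0 : 0 ≤ x) (hx1 : x ≤ 1) : Summable (fun n => p n * x ^ (n + 1)) := by
  apply Summable.of_nonneg_of_le (fun n => mul_nonneg (hp n) (pow_nonneg hx0 _)) (fun n => ?_) hpsum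
  calc p n * x ^ (n + 1) ≤ p n * 1 := by
        apply mul_le_mul_of_nonneg_left ?_ (hp n)
        exact pow_le_one₀ hx0 hx1
    _ = p n := mul_one _

lemma phi_lip (q : ℝ) (p : ℕ → ℝ) (hp : ∀ n, 0 ≤ p n) (hpsum : Summable p)
    (hmoment : Summable (fun n : ℕ => (n + 1 : ℝ) * p n))
    (hcrit : ∑' n : ℕ, (n + 1 : ℝ) * p n = 1)
    {a b : ℝ} (ha : 0 ≤ a) (hab : a ≤ b) (hb : b ≤ 1) :
    phi q p b - phi q p a ≤ b - a := by
  have hb0 : 0 ≤ b := le_trans ha hab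
  have hsa : Summable (fun n => p n * a ^ (n + 1)) :=
    summable_pow_mul p hp hpsum ha (le_trans hab hb)
  have hsb : Summable (fun n => p n * b ^ (n + 1)) :=
    summable_pow_mul p hp hpsum hb0 hb
  have h1 : phi q p b - phi q p a = ∑' n, (p n * b ^ (n + 1) - p n * a ^ (n + 1)) := by
    rw [phi, phi, Summable.tsum_sub hsb hsa]
    ring
  rw [h1]
  have h2 : ∀ n : ℕ, p n * b ^ (n + 1) - p n * a ^ (n + 1) ≤ (((n : ℝ)+1) * p n) * (b - a) := by
    intro n
    have := pow_sub_le_real (n + 1) ha hab hb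
    have hpn := hp n
    have : p n * (b ^ (n+1) - a ^ (n+1)) ≤ p n * (((n : ℝ)+1) * (b - a)) :=
      mul_le_mul_of_nonneg_left (by push_cast at this ⊢; linarith) hpn
    push_cast at this ⊢
    nlinarith [this]
  calc ∑' n : ℕ, (p n * b ^ (n + 1) - p n * a ^ (n + 1))
      ≤ ∑' n : ℕ, (((n : ℝ)+1) * p n) * (b - a) := by
        apply Summable.tsum_le_tsum h2 (hsb.sub hsa) (hmoment.mul_right _)
    _ = (∑' n : ℕ, ((n : ℝ)+1) * p n) * (b - a) := by rw [tsum_mul_right]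
    _ = b - a := by rw [hcrit, one_mul]

lemma fixed_unique (q : ℝ) (p : ℕ → ℝ) (hq : 0 < q) (hp : ∀ n, 0 ≤ p n)
    (hpsum : Summable p)
    (hmoment : Summable (fun n : ℕ => (n + 1 : ℝ) * p n))
    (hcrit : ∑' n : ℕ, (n + 1 : ℝ) * p n = 1)
    (h : ℝ → ℝ) (hmin : IsMinimalSolution (phi q p) h)
    {s : ℝ} (hs : s ∈ Set.Ioo (0 : ℝ) 1)
    {y : ℝ} (hy1 : y ∈ Set.Icc (0 : ℝ) 1) (hy : y = s * phi q p y) : y = h s := by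
  obtain ⟨hIcc, heq, hminle⟩ := hmin s ⟨hs.1.le, hs.2.le⟩
  have hle : h s ≤ y := hminle y hy1 hy
  rcases eq_or_lt_of_le hle with h' | h'
  · exact h'.symm
  · exfalso
    have hlip : phi q p y - phi q p (h s) ≤ y - h s :=
      phi_lip q p hp hpsum hmoment hcrit hIcc.1 hle hy1.2
    have hdiff : y - h s = s * (phi q p y - phi q p (h s)) := by
      rw [mul_sub]; linarith [hy, heq]
    have h2 : s * (phi q p y - phi q p (h s)) ≤ s * (y - h s) :=
      mul_le_mul_of_nonneg_left hlip hs.1.le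
    have h3 : s * (y - h s) < 1 * (y - h s) :=
      mul_lt_mul_of_pos_right hs.2 (by linarith)
    linarith

lemma h_pos (q : ℝ) (p : ℕ → ℝ) (hq : 0 < q) (hp : ∀ n, 0 ≤ p n)
    (h : ℝ → ℝ) (hmin : IsMinimalSolution (phi q p) h)
    {s : ℝ} (hs : s ∈ Set.Ioo (0 : ℝ) 1) : s * q ≤ h s := by
  obtain ⟨hIcc, heq, -⟩ := hmin s ⟨hs.1.le, hs.2.le⟩
  have hsum_nonneg : 0 ≤ ∑' n, p n * (h s) ^ (n + 1) :=
    tsum_nonneg (fun n => mul_nonneg (hp n) (pow_nonneg hIcc.1 _))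
  rw [heq, phi]
  nlinarith [hs.1]
/-! ### the measure side -/

section meas

variable {Ω : Type*} [MeasurableSpace Ω] (μ : MeasureTheory.Measure Ω)
  [MeasureTheory.IsProbabilityMeasure μ] (X : ℕ → Ω → ℤ) (q : ℝ) (p : ℕ → ℝ)

lemma meas_eq_w (hq : 0 < q) (hp : ∀ n, 0 ≤ p n) (hpsum : Summable p)
    (htotal : q + ∑' n : ℕ, p n = 1)
    (hXmeas : ∀ i, Measurable (X i))
    (hX1 : ∀ i, μ {ω | X i ω = 1} = ENNReal.ofReal q)
    (hXn : ∀ i, ∀ n : ℕ, μ {ω | X i ω = -(n : ℤ)} = ENNReal.ofReal (p n))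
    (i : ℕ) (z : ℤ) : μ {ω | X i ω = z} = w q p z := by
  by_cases hz1 : z = 1
  · subst hz1
    rw [w_one]
    exact hX1 i
  by_cases hz0 : z ≤ 0
  · have hz : z = -(((-z).toNat : ℕ) : ℤ) := by omega
    rw [hz, w_neg]
    exact hXn i _
  · rw [w_two q p (by omega)]
    set A : Set Ω := {ω | X i ω = 1} ∪ ⋃ k : ℕ, {ω | X i ω = -(k : ℤ)} with hA
    have hmeas1 : ∀ c : ℤ, MeasurableSet {ω | X i ω = c} := fun c =>
      hXmeas i (measurableSet_singleton c)
    have hAmeas : MeasurableSet A :=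
      (hmeas1 1).union (MeasurableSet.iUnion fun k => hmeas1 _)
    have hdisU : Pairwise (Function.onFun Disjoint (fun k : ℕ => {ω | X i ω = -(k : ℤ)})) := by
      intro a b hab
      refine Set.disjoint_left.mpr fun ω h1 h2 => ?_
      simp only [Set.mem_setOf_eq] at h1 h2
      omega
    have hdis : Disjoint {ω | X i ω = 1} (⋃ k : ℕ, {ω | X i ω = -(k : ℤ)}) := by
      refine Set.disjoint_left.mpr fun ω h1 h2 => ?_
      simp only [Set.mem_setOf_eq] at h1
      simp only [Set.mem_iUnion, Set.mem_setOf_eq] at h2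
      obtain ⟨k, hk⟩ := h2
      omega
    have hμA : μ A = 1 := by
      rw [hA, MeasureTheory.measure_union hdis (MeasurableSet.iUnion fun k => hmeas1 _),
        MeasureTheory.measure_iUnion hdisU (fun k => hmeas1 _), hX1 i]
      have h1 : ∀ k : ℕ, μ {ω | X i ω = -(k : ℤ)} = ENNReal.ofReal (p k) := hXn i
      rw [tsum_congr h1, ← ENNReal.ofReal_tsum_of_nonneg hp hpsum,
        ← ENNReal.ofReal_add hq.le (tsum_nonneg hp), htotal, ENNReal.ofReal_one]
    have hsub : {ω | X i ω = z} ⊆ Aᶜ := by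
      intro ω hω
      simp only [Set.mem_setOf_eq] at hω
      simp only [hA, Set.mem_compl_iff, Set.mem_union, Set.mem_setOf_eq, Set.mem_iUnion,
        not_or, not_exists]
      exact ⟨by omega, fun k => by omega⟩
    have hcompl : μ Aᶜ = 0 := by
      rw [MeasureTheory.measure_compl hAmeas (MeasureTheory.measure_ne_top μ A), hμA]
      simp
    exact le_antisymm ((MeasureTheory.measure_mono hsub).trans_eq hcompl) zero_le

lemma meas_cylinder
    (hq : 0 < q) (hp : ∀ n, 0 ≤ p n) (hpsum : Summable p)
    (htotal : q + ∑' n : ℕ, p n = 1)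
    (hXmeas : ∀ i, Measurable (X i))
    (hiid : ProbabilityTheory.iIndepFun X μ)
    (hX1 : ∀ i, μ {ω | X i ω = 1} = ENNReal.ofReal q)
    (hXn : ∀ i, ∀ n : ℕ, μ {ω | X i ω = -(n : ℤ)} = ENNReal.ofReal (p n))
    (m : ℕ) (x : Fin m → ℤ) :
    μ (⋂ i : Fin m, {ω | X (i.1 + 1) ω = x i}) = ∏ i : Fin m, w q p (x i) := by
  classical
  set y : ℕ → ℤ := fun j => if hj : j - 1 < m then x ⟨j - 1, hj⟩ else 0 with hy
  have hyx : ∀ i : Fin m, y (i.1 + 1) = x i := by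
    intro i
    simp only [hy, Nat.add_sub_cancel]
    rw [dif_pos i.2]
  set S : Finset ℕ := (Finset.range m).image (· + 1) with hS
  set s : ℕ → Set Ω := fun j => X j ⁻¹' {y j} with hs
  have hset : (⋂ i : Fin m, {ω | X (i.1 + 1) ω = x i}) = ⋂ j ∈ S, s j := by
    ext ω
    simp only [Set.mem_iInter, hS, hs, Finset.mem_image, Finset.mem_range, Set.mem_preimage,
      Set.mem_singleton_iff, Set.mem_setOf_eq]
    constructor
    · rintro hH j ⟨a, ha, rfl⟩
      rw [show y (a + 1) = x ⟨a, ha⟩ from hyx ⟨a, ha⟩]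
      exact hH ⟨a, ha⟩
    · intro hH i
      have h2 := hH (i.1 + 1) ⟨i.1, i.2, rfl⟩
      rw [hyx i] at h2
      exact h2
  have hmeasS : ∀ j ∈ S, MeasurableSet[MeasurableSpace.comap (X j) inferInstance] (s j) :=
    fun j _ => ⟨{y j}, measurableSet_singleton _, rfl⟩
  have happly := hiid.meas_biInter (S := S) (s := s) hmeasS
  rw [hset, happly]
  have hinj : Set.InjOn (· + 1) (Finset.range m) := fun a _ b _ hab => by simpa using hab
  rw [Finset.prod_image hinj]
  have h1 : ∀ a ∈ Finset.range m, μ (s (a + 1)) = w q p (y (a + 1)) := by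
    intro a _
    exact meas_eq_w μ X q p hq hp hpsum htotal hXmeas hX1 hXn (a + 1) (y (a + 1))
  rw [Finset.prod_congr rfl h1]
  rw [← Fin.prod_univ_eq_prod_range (fun a => w q p (y (a + 1))) m]
  exact Finset.prod_congr rfl (fun i _ => by rw [hyx i])

lemma event_measurable (hXmeas : ∀ i, Measurable (X i)) (m : ℕ) (Q : List ℤ → Prop) :
    MeasurableSet {ω | Q (List.ofFn fun i : Fin m => X (i.1 + 1) ω)} := by
  have hset : {ω | Q (List.ofFn fun i : Fin m => X (i.1 + 1) ω)} =
      ⋃ x : {x : Fin m → ℤ // Q (List.ofFn x)},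
        ⋂ i : Fin m, {ω | X (i.1 + 1) ω = x.1 i} := by
    ext ω
    simp only [Set.mem_setOf_eq, Set.mem_iUnion, Set.mem_iInter]
    constructor
    · intro hQ
      exact ⟨⟨fun i => X (i.1 + 1) ω, hQ⟩, fun i => rfl⟩
    · rintro ⟨x, hx⟩
      have : (fun i : Fin m => X (i.1 + 1) ω) = x.1 := funext hx
      rw [this]
      exact x.2
  rw [hset]
  exact MeasurableSet.iUnion fun x => MeasurableSet.iInter fun i =>
    hXmeas _ (measurableSet_singleton _)

lemma meas_event
    (hq : 0 < q) (hp : ∀ n, 0 ≤ p n) (hpsum : Summable p)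
    (htotal : q + ∑' n : ℕ, p n = 1)
    (hXmeas : ∀ i, Measurable (X i))
    (hiid : ProbabilityTheory.iIndepFun X μ)
    (hX1 : ∀ i, μ {ω | X i ω = 1} = ENNReal.ofReal q)
    (hXn : ∀ i, ∀ n : ℕ, μ {ω | X i ω = -(n : ℤ)} = ENNReal.ofReal (p n))
    (m : ℕ) (Q : List ℤ → Prop) :
    μ {ω | Q (List.ofFn fun i : Fin m => X (i.1 + 1) ω)} =
      ∑' x : Fin m → ℤ, I (Q (List.ofFn x)) (∏ i : Fin m, w q p (x i)) := by
  have hset : {ω | Q (List.ofFn fun i : Fin m => X (i.1 + 1) ω)} =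
      ⋃ x : {x : Fin m → ℤ // Q (List.ofFn x)},
        ⋂ i : Fin m, {ω | X (i.1 + 1) ω = x.1 i} := by
    ext ω
    simp only [Set.mem_setOf_eq, Set.mem_iUnion, Set.mem_iInter]
    constructor
    · intro hQ
      exact ⟨⟨fun i => X (i.1 + 1) ω, hQ⟩, fun i => rfl⟩
    · rintro ⟨x, hx⟩
      have : (fun i : Fin m => X (i.1 + 1) ω) = x.1 := funext hx
      rw [this]
      exact x.2
  have hdisj : Pairwise (Function.onFun Disjoint
      (fun x : {x : Fin m → ℤ // Q (List.ofFn x)} =>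
        ⋂ i : Fin m, {ω | X (i.1 + 1) ω = x.1 i})) := by
    intro a b hab
    refine Set.disjoint_left.mpr fun ω h1 h2 => ?_
    simp only [Set.mem_iInter, Set.mem_setOf_eq] at h1 h2
    apply hab
    apply Subtype.ext
    funext i
    rw [← h1 i, ← h2 i]
  have hmeasC : ∀ x : {x : Fin m → ℤ // Q (List.ofFn x)},
      MeasurableSet (⋂ i : Fin m, {ω | X (i.1 + 1) ω = x.1 i}) := fun x =>
    MeasurableSet.iInter fun i => hXmeas _ (measurableSet_singleton _)
  rw [hset, MeasureTheory.measure_iUnion hdisj hmeasC]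
  have h1 : ∀ x : {x : Fin m → ℤ // Q (List.ofFn x)},
      μ (⋂ i : Fin m, {ω | X (i.1 + 1) ω = x.1 i}) = ∏ i : Fin m, w q p (x.1 i) := fun x =>
    meas_cylinder μ X q p hq hp hpsum htotal hXmeas hiid hX1 hXn m x.1
  rw [tsum_congr h1, ← tsum_I_subtype (fun x : Fin m → ℤ => Q (List.ofFn x))
    (fun x => ∏ i : Fin m, w q p (x i))]

end meas
/-! ### walk lemmas -/

section walk

variable {Ω : Type*} (X : ℕ → Ω → ℤ)

lemma ps_ofFn_walk (ω : Ω) (m : ℕ) :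
    ∀ j, j ≤ m → ps (List.ofFn fun i : Fin m => X (i.1 + 1) ω) j = walkS X j ω := by
  intro j
  induction j with
  | zero => intro _; simp [walkS]
  | succ j ih =>
    intro hj
    have hlen : j < (List.ofFn fun i : Fin m => X (i.1 + 1) ω).length := by
      simp only [List.length_ofFn]
      omega
    rw [ps_succ _ hlen, ih (by omega), walkS, walkS, Finset.sum_range_succ]
    congr 1
    simp [List.getElem_ofFn]

lemma sum_ofFn_walk (ω : Ω) (m : ℕ) :
    (List.ofFn fun i : Fin m => X (i.1 + 1) ω).sum = walkS X m ω := by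
  rw [← ps_ofFn_walk X ω m m le_rfl, ps, List.take_of_length_le (by simp)]

lemma ladderT_eq (ω : Ω) :
    ladderT X ω = sInf {m : ℕ | 1 ≤ m ∧ 0 ≤ walkS X m ω} := by
  set A := {m : ℕ | 1 ≤ m ∧ walkM X (m - 1) ω ≤ walkS X m ω} with hA
  set B := {m : ℕ | 1 ≤ m ∧ 0 ≤ walkS X m ω} with hB
  have hAB : A ⊆ B := by
    intro m hm
    obtain ⟨hm1, hm2⟩ := hm
    refine ⟨hm1, le_trans ?_ hm2⟩
    have h0 : walkS X 0 ω ≤ (Finset.range (m - 1 + 1)).sup'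
        Finset.nonempty_range_add_one (fun k => walkS X k ω) :=
      Finset.le_sup' (fun k => walkS X k ω) (Finset.mem_range.mpr (Nat.succ_pos _))
    simpa [walkM, walkS] using h0
  show sInf A = sInf B
  rcases Set.eq_empty_or_nonempty B with hBe | hBne
  · have hAe : A = ∅ := Set.eq_empty_of_subset_empty (hBe ▸ hAB)
    rw [hAe, hBe]
  · have hbB : sInf B ∈ B := Nat.sInf_mem hBne
    have hbA : sInf B ∈ A := by
      refine ⟨hbB.1, ?_⟩
      simp only [walkM]
      apply Finset.sup'_le
      intro k hk
      simp only [Finset.mem_range] at hk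
      rcases Nat.eq_zero_or_pos k with rfl | hkpos
      · simpa [walkS] using hbB.2
      · have hkB : k ∉ B := Nat.notMem_of_lt_sInf (by omega)
        simp only [hB, Set.mem_setOf_eq, not_and, not_le] at hkB
        have h1 := hkB hkpos
        have h2 := hbB.2
        omega
    exact le_antisymm (Nat.sInf_le hbA) (Nat.sInf_le (hAB (Nat.sInf_mem ⟨_, hbA⟩)))

lemma ladderT_eq_iff (ω : Ω) {m : ℕ} (hm : 1 ≤ m) :
    ladderT X ω = m ↔ (0 ≤ walkS X m ω ∧ ∀ j, 1 ≤ j → j < m → walkS X j ω < 0) := by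
  rw [ladderT_eq X ω]
  set B := {m : ℕ | 1 ≤ m ∧ 0 ≤ walkS X m ω} with hB
  constructor
  · intro h
    have hne : B.Nonempty := by
      by_contra hc
      rw [Set.not_nonempty_iff_eq_empty] at hc
      rw [hc, Nat.sInf_empty] at h
      omega
    have hmB : m ∈ B := h ▸ Nat.sInf_mem hne
    refine ⟨hmB.2, fun j hj1 hj2 => ?_⟩
    have hj : j ∉ B := Nat.notMem_of_lt_sInf (by omega)
    simp only [hB, Set.mem_setOf_eq, not_and, not_le] at hj
    exact hj hj1
  · rintro ⟨h0, hj⟩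
    have hmB : m ∈ B := ⟨hm, h0⟩
    apply le_antisymm (Nat.sInf_le hmB)
    by_contra hc
    push_neg at hc
    have hsB := Nat.sInf_mem (⟨m, hmB⟩ : B.Nonempty)
    have h1 := hsB.1
    have h2 := hsB.2
    have := hj (sInf B) h1 hc
    omega

lemma Tc_iff (ω : Ω) {m : ℕ} (hm : 1 ≤ m) :
    ladderT X ω = m ↔ Tc (List.ofFn fun i : Fin m => X (i.1 + 1) ω) := by
  rw [ladderT_eq_iff X ω hm]
  constructor
  · rintro ⟨h0, hj⟩
    refine ⟨?_, ?_, ?_⟩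
    · intro hc
      have := congrArg List.length hc
      simp at this
      omega
    · intro j hj1 hj2
      simp only [List.length_ofFn] at hj2
      rw [ps_ofFn_walk X ω m j (by omega)]
      exact hj j hj1 hj2
    · rw [sum_ofFn_walk]
      exact h0
  · rintro ⟨-, hj, hsum⟩
    constructor
    · rw [sum_ofFn_walk] at hsum
      exact hsum
    · intro j hj1 hj2
      have := hj j hj1 (by simp only [List.length_ofFn]; omega)
      rw [ps_ofFn_walk X ω m j (by omega)] at this
      exact this

lemma FPn_one_iff (ω : Ω) (n : ℕ) :
    FPn 1 (List.ofFn fun i : Fin n => X (i.1 + 1) ω) ↔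
      ((∀ j < n, walkS X j ω < 1) ∧ 1 ≤ walkS X n ω) := by
  constructor
  · rintro ⟨h1, h2⟩
    refine ⟨fun j hj => ?_, ?_⟩
    · have := h1 j (by simp only [List.length_ofFn]; omega)
      rw [ps_ofFn_walk X ω n j (by omega)] at this
      exact_mod_cast this
    · rw [sum_ofFn_walk] at h2
      exact_mod_cast h2
  · rintro ⟨h1, h2⟩
    refine ⟨fun j hj => ?_, ?_⟩
    · simp only [List.length_ofFn] at hj
      rw [ps_ofFn_walk X ω n j (by omega)]
      exact_mod_cast h1 j hj
    · rw [sum_ofFn_walk]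
      exact_mod_cast h2

end walk
/-! ### sigma decomposition over path length, and the bound `g 1 ≤ 1` -/

lemma tsum_I_sigma (q : ℝ) (p : ℕ → ℝ) (σ : ℝ≥0∞) (P : List ℤ → Prop) :
    ∑' l : List ℤ, I (P l) (F q p σ l) =
      ∑' n : ℕ, σ ^ n * ∑' x : Fin n → ℤ, I (P (List.ofFn x)) (∏ i : Fin n, w q p (x i)) := by
  rw [tsum_list_eq_sigma]
  apply tsum_congr
  intro n
  rw [← ENNReal.tsum_mul_left]
  apply tsum_congr
  intro x
  rw [I_mul_left]
  congr 1
  rw [F, List.length_ofFn, List.map_ofFn, List.prod_ofFn]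
  rfl

section bound

variable {Ω : Type*} [MeasurableSpace Ω] (μ : MeasureTheory.Measure Ω)
  [MeasureTheory.IsProbabilityMeasure μ] (X : ℕ → Ω → ℤ) (q : ℝ) (p : ℕ → ℝ)

lemma g_one_le_one (hq : 0 < q) (hp : ∀ n, 0 ≤ p n) (hpsum : Summable p)
    (htotal : q + ∑' n : ℕ, p n = 1)
    (hXmeas : ∀ i, Measurable (X i))
    (hiid : ProbabilityTheory.iIndepFun X μ)
    (hX1 : ∀ i, μ {ω | X i ω = 1} = ENNReal.ofReal q)
    (hXn : ∀ i, ∀ n : ℕ, μ {ω | X i ω = -(n : ℤ)} = ENNReal.ofReal (p n))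
    (σ : ℝ≥0∞) (hσ : σ ≤ 1) : g q p σ 1 ≤ 1 := by
  rw [← gn_eq_g, gn, tsum_I_sigma]
  set D : ℕ → Set Ω := fun n => {ω | FPn 1 (List.ofFn fun i : Fin n => X (i.1 + 1) ω)} with hD
  have hDmeas : ∀ n, MeasurableSet (D n) := fun n =>
    event_measurable X hXmeas n (FPn 1)
  have key : ∀ a b : ℕ, a < b → Disjoint (D a) (D b) := by
    intro a b hab
    refine Set.disjoint_left.mpr fun ω h1 h2 => ?_
    have h1' := (FPn_one_iff X ω a).mp h1
    have h2' := (FPn_one_iff X ω b).mp h2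
    have h3 := h2'.1 a hab
    have h4 := h1'.2
    omega
  have hDdis : Pairwise (Function.onFun Disjoint D) := by
    intro a b hab
    rcases lt_or_gt_of_ne hab with hlt | hgt
    · exact key a b hlt
    · exact (key b a hgt).symm
  have hinner : ∀ n : ℕ,
      (∑' x : Fin n → ℤ, I (FPn 1 (List.ofFn x)) (∏ i : Fin n, w q p (x i))) = μ (D n) :=
    fun n => (meas_event μ X q p hq hp hpsum htotal hXmeas hiid hX1 hXn n (FPn 1)).symm
  calc ∑' n : ℕ, σ ^ n * ∑' x : Fin n → ℤ, I (FPn 1 (List.ofFn x)) (∏ i : Fin n, w q p (x i))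
      = ∑' n : ℕ, σ ^ n * μ (D n) := tsum_congr fun n => by rw [hinner n]
    _ ≤ ∑' n : ℕ, 1 * μ (D n) :=
        Summable.tsum_le_tsum (fun n => mul_le_mul' (pow_le_one' hσ n) le_rfl)
          ENNReal.summable ENNReal.summable
    _ = μ (⋃ n, D n) := by
        rw [show (∑' n : ℕ, 1 * μ (D n)) = ∑' n : ℕ, μ (D n) from tsum_congr fun n => one_mul _]
        exact (MeasureTheory.measure_iUnion hDdis hDmeas).symm
    _ ≤ 1 := MeasureTheory.prob_le_one

end bound
end LPR
open LPR in
/-- Lemma 3: generating function of the first weak ladder epoch of a right continuous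
random walk: `∑_{n≥1} s^n P(T = n) = 1 + q s − q s / h(s)`. -/
theorem ladder_pgf_right
    (q : ℝ) (p : ℕ → ℝ) (hq : 0 < q) (hp : ∀ n, 0 ≤ p n)
    (hpsum : Summable p) (htotal : q + ∑' n : ℕ, p n = 1) (hp0 : p 0 < 1)
    (hmoment : Summable (fun n : ℕ => (n + 1 : ℝ) * p n))
    (hcrit : ∑' n : ℕ, (n + 1 : ℝ) * p n = 1)
    (h : ℝ → ℝ) (hmin : IsMinimalSolution (phi q p) h)
    {Ω : Type*} [MeasurableSpace Ω] (μ : Measure Ω) [IsProbabilityMeasure μ]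
    (X : ℕ → Ω → ℤ) (hXmeas : ∀ i, Measurable (X i))
    (hiid : iIndepFun X μ)
    (hident : ∀ i j, IdentDistrib (X i) (X j) μ μ)
    (hX1 : ∀ i, μ {ω | X i ω = 1} = ENNReal.ofReal q)
    (hXn : ∀ i, ∀ n : ℕ, μ {ω | X i ω = -(n : ℤ)} = ENNReal.ofReal (p n))
:
    ∀ s ∈ Set.Ioo (0 : ℝ) 1,
      ∑' n : ℕ, s ^ (n + 1) * (μ {ω | ladderT X ω = n + 1}).toReal =
        1 + q * s - q * s / h s := by
  intro s hs
  have hs0 : 0 < s := hs.1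
  have hs1 : s < 1 := hs.2
  obtain ⟨σ, hσdef⟩ : ∃ x : ℝ≥0∞, x = ENNReal.ofReal s := ⟨_, rfl⟩
  have hσ1 : σ ≤ 1 := by
    rw [hσdef]
    exact ENNReal.ofReal_le_one.mpr hs1.le
  obtain ⟨G, hGdef⟩ : ∃ x : ℝ≥0∞, x = g q p σ 1 := ⟨_, rfl⟩
  have hGle : G ≤ 1 := by
    rw [hGdef]
    exact g_one_le_one μ X q p hq hp hpsum htotal hXmeas hiid hX1 hXn σ hσ1
  have hGfin : G ≠ ⊤ := ne_top_of_le_ne_top ENNReal.one_ne_top hGle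
  obtain ⟨Gr, hGrdef⟩ : ∃ x : ℝ, x = G.toReal := ⟨_, rfl⟩
  have hGr0 : 0 ≤ Gr := hGrdef ▸ ENNReal.toReal_nonneg
  have hGr1 : Gr ≤ 1 := by
    rw [hGrdef]
    have := ENNReal.toReal_mono ENNReal.one_ne_top hGle
    simpa using this
  -- fixed point equation for G
  have hfixE : G = σ * ENNReal.ofReal q + ∑' k : ℕ, σ * ENNReal.ofReal (p k) * G ^ (k + 1) := by
    have h1 : g q p σ 1 = σ * ENNReal.ofReal q
        + ∑' k : ℕ, σ * ENNReal.ofReal (p k) * (g q p σ 1) ^ (k + 1) :=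
      (tsum_g_one q p σ).trans (by
        congr 1
        exact tsum_congr fun k => by rw [g_pow q p σ (k + 1)])
    conv_lhs => rw [hGdef]
    rw [h1, ← hGdef]
  have hterm_ne_top : ∀ k : ℕ, σ * ENNReal.ofReal (p k) * G ^ (k + 1) ≠ ⊤ := fun k => by
    rw [hσdef]
    exact ENNReal.mul_ne_top (ENNReal.mul_ne_top ENNReal.ofReal_ne_top ENNReal.ofReal_ne_top)
      (ENNReal.pow_ne_top hGfin)
  have htsum_ne_top : (∑' k : ℕ, σ * ENNReal.ofReal (p k) * G ^ (k + 1)) ≠ ⊤ := by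
    apply ne_top_of_le_ne_top hGfin
    conv_rhs => rw [hfixE]
    exact le_add_self
  have hσfin : σ * ENNReal.ofReal q ≠ ⊤ := by
    rw [hσdef]
    exact ENNReal.mul_ne_top ENNReal.ofReal_ne_top ENNReal.ofReal_ne_top
  have hreal : Gr = s * q + ∑' k : ℕ, s * p k * Gr ^ (k + 1) := by
    have hcast := congrArg ENNReal.toReal hfixE
    rw [ENNReal.toReal_add hσfin htsum_ne_top,
      ENNReal.tsum_toReal_eq hterm_ne_top] at hcast
    have hterm : ∀ k : ℕ, (σ * ENNReal.ofReal (p k) * G ^ (k + 1)).toReal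
        = s * p k * Gr ^ (k + 1) := by
      intro k
      rw [ENNReal.toReal_mul, ENNReal.toReal_mul, ENNReal.toReal_pow, hσdef,
        ENNReal.toReal_ofReal hs0.le, ENNReal.toReal_ofReal (hp k), ← hGrdef]
    rw [show (∑' k : ℕ, (σ * ENNReal.ofReal (p k) * G ^ (k + 1)).toReal)
        = ∑' k : ℕ, s * p k * Gr ^ (k + 1) from tsum_congr hterm] at hcast
    rw [ENNReal.toReal_mul, hσdef, ENNReal.toReal_ofReal hs0.le,
      ENNReal.toReal_ofReal hq.le, ← hGrdef] at hcast
    exact hcast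
  have hphi : Gr = s * phi q p Gr := by
    have hpull : (∑' k : ℕ, s * p k * Gr ^ (k + 1)) = s * ∑' k : ℕ, p k * Gr ^ (k + 1) := by
      rw [← tsum_mul_left]; exact tsum_congr fun k => by ring
    conv_lhs => rw [hreal, hpull]
    rw [phi]
    ring
  have hGrh : Gr = h s :=
    fixed_unique q p hq hp hpsum hmoment hcrit h hmin hs ⟨hGr0, hGr1⟩ hphi
  -- facts about H := h s
  obtain ⟨H, hHdef⟩ : ∃ x : ℝ, x = h s := ⟨_, rfl⟩
  have hGofReal : G = ENNReal.ofReal H := by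
    rw [hHdef, ← hGrh, hGrdef, ENNReal.ofReal_toReal hGfin]
  obtain ⟨hHIcc, hHeq, -⟩ := hmin s ⟨hs0.le, hs1.le⟩
  have hH0 : 0 < H := by
    rw [hHdef]
    exact lt_of_lt_of_le (by positivity) (h_pos q p hq hp h hmin hs)
  have hH1 : H ≤ 1 := hHdef ▸ hHIcc.2
  have hsR : Summable (fun k : ℕ => p k * H ^ k) := by
    apply Summable.of_nonneg_of_le
      (fun k => mul_nonneg (hp k) (pow_nonneg hH0.le _)) (fun k => ?_) hpsum
    calc p k * H ^ k ≤ p k * 1 :=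
          mul_le_mul_of_nonneg_left (pow_le_one₀ hH0.le hH1) (hp k)
      _ = p k := mul_one _
  obtain ⟨R, hRdef⟩ : ∃ x : ℝ, x = ∑' k : ℕ, p k * H ^ k := ⟨_, rfl⟩
  have hR0 : 0 ≤ R := hRdef ▸ tsum_nonneg fun k => mul_nonneg (hp k) (pow_nonneg hH0.le _)
  have hkey : s * (H * R) = H - s * q := by
    have hHR : (∑' n : ℕ, p n * H ^ (n + 1)) = H * R := by
      rw [hRdef, ← tsum_mul_left]
      exact tsum_congr fun n => by ring
    have hexp : H = s * q + s * (H * R) := by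
      have hHeq' : H = s * phi q p H := by rw [hHdef]; exact hHeq
      conv_lhs => rw [hHeq']
      rw [phi, hHR]
      ring
    linarith
  -- the measure computation
  have hE : ∀ n : ℕ, μ {ω | ladderT X ω = n + 1}
      = ∑' x : Fin (n + 1) → ℤ, I (Tc (List.ofFn x)) (∏ i : Fin (n + 1), w q p (x i)) := by
    intro n
    have hset : {ω | ladderT X ω = n + 1}
        = {ω | Tc (List.ofFn fun i : Fin (n + 1) => X (i.1 + 1) ω)} := by
      ext ω
      exact Tc_iff X ω (Nat.succ_le_succ (Nat.zero_le n))
    rw [hset]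
    exact meas_event μ X q p hq hp hpsum htotal hXmeas hiid hX1 hXn (n + 1) Tc
  obtain ⟨J, hJdef⟩ : ∃ x : ℝ≥0∞, x = ∑' l : List ℤ, I (Tc l) (F q p σ l) := ⟨_, rfl⟩
  have hJ1 : J = ∑' n : ℕ, σ ^ (n + 1) * μ {ω | ladderT X ω = n + 1} := by
    rw [hJdef, tsum_I_sigma]
    have hf0 : (σ : ℝ≥0∞) ^ 0 *
        (∑' x : Fin 0 → ℤ, I (Tc (List.ofFn x)) (∏ i : Fin 0, w q p (x i))) = 0 := by
      rw [show (∑' x : Fin 0 → ℤ, I (Tc (List.ofFn x)) (∏ i : Fin 0, w q p (x i))) = 0 from by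
        convert tsum_zero with x
        exact I_neg (fun hc => hc.1 (by simp)) _]
      rw [mul_zero]
    rw [tsum_eq_zero_add' (f := fun n : ℕ =>
      σ ^ n * ∑' x : Fin n → ℤ, I (Tc (List.ofFn x)) (∏ i : Fin n, w q p (x i)))
      ENNReal.summable, hf0, zero_add]
    exact tsum_congr fun n => by rw [hE n]
  have hJ2 : J = ENNReal.ofReal (s * q + s * R) := by
    rw [hJdef, tsum_Tc]
    have hterm : ∀ k : ℕ, σ * ENNReal.ofReal (p k) * gn q p σ k
        = ENNReal.ofReal (s * (p k * H ^ k)) := by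
      intro k
      rw [gn_eq_g, g_pow, ← hGdef, hGofReal, ← ENNReal.ofReal_pow hH0.le, hσdef,
        ← ENNReal.ofReal_mul hs0.le, ← ENNReal.ofReal_mul (mul_nonneg hs0.le (hp k)),
        mul_assoc]
    rw [show (∑' k : ℕ, σ * ENNReal.ofReal (p k) * gn q p σ k)
        = ∑' k : ℕ, ENNReal.ofReal (s * (p k * H ^ k)) from tsum_congr hterm]
    rw [← ENNReal.ofReal_tsum_of_nonneg
      (fun k => mul_nonneg hs0.le (mul_nonneg (hp k) (pow_nonneg hH0.le _)))
      (hsR.mul_left s)]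
    rw [tsum_mul_left, hσdef, ← ENNReal.ofReal_mul hs0.le,
      ← ENNReal.ofReal_add (mul_nonneg hs0.le hq.le)
        (mul_nonneg hs0.le (hRdef ▸ tsum_nonneg fun k =>
          mul_nonneg (hp k) (pow_nonneg hH0.le _))), ← hRdef]
  have hLHS : (∑' n : ℕ, s ^ (n + 1) * (μ {ω | ladderT X ω = n + 1}).toReal) = J.toReal := by
    rw [hJ1, ENNReal.tsum_toReal_eq (fun n => by
      rw [hσdef]
      exact ENNReal.mul_ne_top (ENNReal.pow_ne_top ENNReal.ofReal_ne_top)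
        (MeasureTheory.measure_ne_top μ _))]
    exact tsum_congr fun n => by
      rw [ENNReal.toReal_mul, ENNReal.toReal_pow, hσdef, ENNReal.toReal_ofReal hs0.le]
  rw [hLHS, hJ2, ENNReal.toReal_ofReal
    (add_nonneg (mul_nonneg hs0.le hq.le) (mul_nonneg hs0.le hR0)), ← hHdef]
  have hHne : H ≠ 0 := ne_of_gt hH0
  field_simp
  nlinarith [hkey]
end

section
/- The function Λ_r is differentiable on (−∞,0), its derivative Λ_r′ is strictly increasing on (−∞,0), and lim_{λ→−∞} Λ_r′(λ) = 1 while lim_{λ→0−} Λ_r′(λ) = +∞. -/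
/-!
Write `x = h(e^λ)` and `g(x) = ∑ pₙ xⁿ`, so that `φ(x) = q + x g(x)` and `e^λ = ψ(x) := x / φ(x)`.
Then `Λ_r(λ) = λ + log (q + g(x))`, and differentiating through the inverse `h` of the increasing
map `ψ` gives `Λ_r'(λ) = 1 + B/(q + g) · φ/(q - x B)`, where `B(x) = ∑ n pₙ xⁿ = x g'(x)`.
Criticality says `B(1) = q`, so `q - x B` is positive on `[0, 1)` and vanishes at `1`. The ratio
`B/(q + g)` is nondecreasing (a Chebyshev-type rearrangement of the double series), so `Λ_r'`
increases strictly with `x`, hence with `λ`, from `1` at `x = 0` to `+∞` at `x = 1`.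
-/

open MeasureTheory ProbabilityTheory Filter Topology

/-- `Λ_r(λ) = ln(1 + q e^λ − q e^λ / h(e^λ))` for `λ < 0`, and `Λ_r(0) = 0`
(also on `λ > 0`, which is irrelevant). -/
noncomputable def LambdaR (q : ℝ) (h : ℝ → ℝ) (l : ℝ) : ℝ :=
  if l < 0 then Real.log (1 + q * Real.exp l - q * Real.exp l / h (Real.exp l)) else 0

/-- `Λ_r*(x) = sup_{λ ≤ 0} (xλ − Λ_r(λ))`, as an extended real number. -/
noncomputable def LambdaRStar (q : ℝ) (h : ℝ → ℝ) (x : ℝ) : EReal :=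
  ⨆ l ∈ Set.Iic (0 : ℝ), ((x * l - LambdaR q h l : ℝ) : EReal)

open Set Real

noncomputable def genFun (a : ℕ → ℝ) (x : ℝ) : ℝ := ∑' n, a n * x ^ n

section GenFun

variable {a : ℕ → ℝ}

lemma norm_mul_pow_le_of_abs_le_one (ha : ∀ n, 0 ≤ a n) {x : ℝ} (hx : |x| ≤ 1) (n : ℕ) :
    ‖a n * x ^ n‖ ≤ a n := by
  rw [norm_mul, norm_pow, Real.norm_of_nonneg (ha n), Real.norm_eq_abs]
  exact mul_le_of_le_one_right (ha n) (pow_le_one₀ (abs_nonneg x) hx)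

lemma summable_mul_pow_of_abs_le_one (ha : ∀ n, 0 ≤ a n) (hs : Summable a) {x : ℝ} (hx : |x| ≤ 1) :
    Summable (fun n => a n * x ^ n) :=
  hs.of_norm_bounded (norm_mul_pow_le_of_abs_le_one ha hx)

lemma genFun_zero : genFun a 0 = a 0 := by
  rw [genFun, tsum_eq_single 0 fun n hn => by simp [zero_pow hn]]
  simp

lemma genFun_one : genFun a 1 = ∑' n, a n := by
  simp [genFun]

lemma genFun_nonneg (ha : ∀ n, 0 ≤ a n) {x : ℝ} (hx : 0 ≤ x) : 0 ≤ genFun a x :=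
  tsum_nonneg fun n => mul_nonneg (ha n) (pow_nonneg hx n)

lemma genFun_pos (ha : ∀ n, 0 ≤ a n) (hs : Summable a) (hpos : 0 < ∑' n, a n) {x : ℝ}
    (hx : x ∈ Ioc 0 1) : 0 < genFun a x := by
  obtain ⟨m, hm⟩ : ∃ m, 0 < a m := by
    by_contra! h
    have : a = 0 := funext fun m => le_antisymm (h m) (ha m)
    simp [this] at hpos
  have hx' : |x| ≤ 1 := by rw [abs_of_pos hx.1]; exact hx.2
  exact (summable_mul_pow_of_abs_le_one ha hs hx').tsum_pos
    (fun n => mul_nonneg (ha n) (pow_nonneg hx.1.le n)) m (mul_pos hm (pow_pos hx.1 m))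

lemma genFun_mono (ha : ∀ n, 0 ≤ a n) (hs : Summable a) : MonotoneOn (genFun a) (Icc 0 1) :=
  fun x hx y hy hxy => by
    have habs : ∀ z ∈ Icc (0 : ℝ) 1, |z| ≤ 1 := fun z hz => by rw [abs_of_nonneg hz.1]; exact hz.2
    exact (summable_mul_pow_of_abs_le_one ha hs (habs x hx)).tsum_le_tsum
      (fun n => mul_le_mul_of_nonneg_left (pow_le_pow_left₀ hx.1 hxy n) (ha n))
      (summable_mul_pow_of_abs_le_one ha hs (habs y hy))

lemma continuousOn_genFun (ha : ∀ n, 0 ≤ a n) (hs : Summable a) :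
    ContinuousOn (genFun a) (Icc (-1) 1) :=
  continuousOn_tsum (fun n => (continuous_const.mul (continuous_pow n)).continuousOn) hs
    fun n _ hx => norm_mul_pow_le_of_abs_le_one ha (abs_le.mpr hx) n

lemma hasDerivAt_genFun (ha : ∀ n, 0 ≤ a n) (hs : Summable fun n : ℕ => n * a n) {x : ℝ}
    (hx : x ∈ Ioo 0 1) : HasDerivAt (genFun a) (genFun (fun n => n * a n) x / x) x := by
  have hterm : ∀ n : ℕ, a n * (n * x ^ (n - 1)) * x = n * a n * x ^ n := by
    rintro (_ | n)
    · simp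
    · rw [Nat.add_sub_cancel, pow_succ]; ring
  have hsum : ∑' n : ℕ, a n * (n * x ^ (n - 1)) = genFun (fun n => n * a n) x / x := by
    rw [eq_div_iff hx.1.ne', ← tsum_mul_right]
    exact tsum_congr hterm
  rw [← hsum]
  refine hasDerivAt_tsum_of_isPreconnected hs isOpen_Ioo isPreconnected_Ioo
    (fun n y _ => (hasDerivAt_pow n y).const_mul (a n)) (fun n y hy => ?_) hx ?_ hx
  · rw [norm_mul, norm_mul, Real.norm_of_nonneg (ha n), Real.norm_natCast,
      Real.norm_of_nonneg (pow_nonneg hy.1.le _)]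
    calc a n * (n * y ^ (n - 1)) ≤ a n * (n * 1) := mul_le_mul_of_nonneg_left
          (mul_le_mul_of_nonneg_left (pow_le_one₀ hy.1.le hy.2.le) n.cast_nonneg) (ha n)
      _ = n * a n := by ring
  · -- `a n ≤ n * a n` once `n ≥ 1`
    refine (summable_nat_add_iff 1).mp (((summable_nat_add_iff 1).mpr hs).of_nonneg_of_le
      (fun n => mul_nonneg (ha _) (pow_nonneg hx.1.le _)) fun n => ?_)
    calc a (n + 1) * x ^ (n + 1) ≤ a (n + 1) * 1 :=
          mul_le_mul_of_nonneg_left (pow_le_one₀ hx.1.le hx.2.le) (ha _)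
      _ ≤ (n + 1 : ℕ) * a (n + 1) := by
          rw [mul_one]; exact le_mul_of_one_le_left (ha _) (by simp)

lemma genFun_mul_genFun {b c : ℕ → ℝ} (hb : ∀ n, 0 ≤ b n) (hc : ∀ n, 0 ≤ c n)
    (hbs : Summable b) (hcs : Summable c) {z w : ℝ} (hz : z ∈ Icc 0 1) (hw : w ∈ Icc 0 1) :
    HasSum (fun k : ℕ × ℕ => b k.1 * z ^ k.1 * (c k.2 * w ^ k.2)) (genFun b z * genFun c w) := by
  have habs : ∀ t ∈ Icc (0 : ℝ) 1, |t| ≤ 1 := fun t ht => abs_le.mpr ⟨by linarith [ht.1], ht.2⟩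
  have hbz := summable_mul_pow_of_abs_le_one hb hbs (habs z hz)
  have hcw := summable_mul_pow_of_abs_le_one hc hcs (habs w hw)
  have hprod := hbz.mul_of_nonneg hcw (fun n => mul_nonneg (hb n) (pow_nonneg hz.1 n))
    (fun n => mul_nonneg (hc n) (pow_nonneg hw.1 n))
  rw [genFun, genFun, hbz.tsum_mul_tsum hcw hprod]
  exact hprod.hasSum

lemma natCast_sub_mul_pow_sub_nonneg {x y : ℝ} (hx : 0 ≤ x) (hxy : x ≤ y) (n m : ℕ) :
    0 ≤ ((n : ℝ) - m) * (x ^ m * y ^ n - x ^ n * y ^ m) := by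
  have key : ∀ m n : ℕ, m ≤ n → 0 ≤ ((n : ℝ) - m) * (x ^ m * y ^ n - x ^ n * y ^ m) := by
    intro m n hmn
    obtain ⟨k, rfl⟩ := Nat.exists_eq_add_of_le hmn
    have hxk : x ^ k ≤ y ^ k := pow_le_pow_left₀ hx hxy k
    have : ((↑(m + k) : ℝ) - m) * (x ^ m * y ^ (m + k) - x ^ (m + k) * y ^ m)
        = k * ((x * y) ^ m * (y ^ k - x ^ k)) := by push_cast; ring
    rw [this]
    exact mul_nonneg k.cast_nonneg
      (mul_nonneg (pow_nonneg (mul_nonneg hx (hx.trans hxy)) m) (sub_nonneg.mpr hxk))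
  rcases le_total m n with hmn | hnm
  · exact key m n hmn
  · have := key n m hnm
    linarith

lemma genFun_natCast_mul_mul_genFun_le (ha : ∀ n, 0 ≤ a n) (hs : Summable a)
    (hs' : Summable fun n : ℕ => n * a n) {x y : ℝ} (hx : 0 ≤ x) (hxy : x ≤ y) (hy : y ≤ 1) :
    genFun (fun n => n * a n) x * genFun a y ≤ genFun (fun n => n * a n) y * genFun a x := by
  have hb : ∀ n : ℕ, 0 ≤ (n : ℝ) * a n := fun n => mul_nonneg n.cast_nonneg (ha n)
  have hxI : x ∈ Icc (0 : ℝ) 1 := ⟨hx, hxy.trans hy⟩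
  have hyI : y ∈ Icc (0 : ℝ) 1 := ⟨hx.trans hxy, hy⟩
  have hF := genFun_mul_genFun hb ha hs' hs hxI hyI
  have hG := genFun_mul_genFun hb ha hs' hs hyI hxI
  -- Add each double series to its transpose; termwise the difference of the two sides is
  -- `aₙ aₘ (n - m) (xᵐ yⁿ - xⁿ yᵐ) ≥ 0`.
  have hsum := hasSum_le (fun k => ?_) (hF.add ((Equiv.prodComm ℕ ℕ).hasSum_iff.mpr hF))
    (hG.add ((Equiv.prodComm ℕ ℕ).hasSum_iff.mpr hG))
  · linarith
  · obtain ⟨n, m⟩ := k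
    have := mul_nonneg (mul_nonneg (ha n) (ha m)) (natCast_sub_mul_pow_sub_nonneg hx hxy n m)
    simp only [Function.comp, Equiv.prodComm_apply, Prod.fst_swap, Prod.snd_swap]
    linear_combination this

lemma monotoneOn_genFun_natCast_mul_div (ha : ∀ n, 0 ≤ a n) (hs : Summable a)
    (hs' : Summable fun n : ℕ => n * a n) {c : ℝ} (hc : 0 < c) :
    MonotoneOn (fun x => genFun (fun n => n * a n) x / (c + genFun a x)) (Icc 0 1) := by
  intro x hx y hy hxy
  have hpos : ∀ z ∈ Icc (0 : ℝ) 1, 0 < c + genFun a z := fun z hz =>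
    add_pos_of_pos_of_nonneg hc (genFun_nonneg ha hz.1)
  rw [div_le_div_iff₀ (hpos x hx) (hpos y hy)]
  have hB := genFun_mono (fun n => mul_nonneg n.cast_nonneg (ha n)) hs' hx hy hxy
  linarith [genFun_natCast_mul_mul_genFun_le ha hs hs' hx.1 hxy hy.2,
    mul_le_mul_of_nonneg_left hB hc.le]

end GenFun

lemma continuousOn_of_rightInvOn_strictMonoOn {α β : Type*} [LinearOrder α] [TopologicalSpace α]
    [OrderTopology α] [LinearOrder β] [TopologicalSpace β] [OrderTopology β]
    {f : α → β} {g : β → α} {s : Set α} {t : Set β} [s.OrdConnected] [t.OrdConnected]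
    (hf : StrictMonoOn f s) (hfst : MapsTo f s t) (hgts : MapsTo g t s) (hfg : RightInvOn g f t) :
    ContinuousOn g t := by
  let e : s ≃o t := StrictMono.orderIsoOfSurjective (hfst.restrict f s t)
    (fun x y hxy => hf x.2 y.2 hxy) (fun y => ⟨⟨g y, hgts y.2⟩, Subtype.ext (hfg y.2)⟩)
  have he : ∀ y : t, e.symm y = ⟨g y, hgts y.2⟩ := fun y =>
    e.symm_apply_eq.mpr (Subtype.ext (hfg y.2).symm)
  rw [continuousOn_iff_continuous_domRestrict]
  convert continuous_subtype_val.comp e.symm.continuous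
  funext y
  rw [Function.comp_apply, he]; rfl

lemma strictMonoOn_of_rightInvOn {α β : Type*} [LinearOrder α] [LinearOrder β]
    {f : α → β} {g : β → α} {s : Set α} {t : Set β} (hf : StrictMonoOn f s) (hgts : MapsTo g t s)
    (hfg : RightInvOn g f t) : StrictMonoOn g t := fun y hy y' hy' hyy' =>
  (hf.lt_iff_lt (hgts hy) (hgts hy')).mp (by rwa [hfg hy, hfg hy'])

lemma IsMinimalSolution.apply_zero {φ h : ℝ → ℝ} (hmin : IsMinimalSolution φ h) : h 0 = 0 := by
  simpa using (hmin 0 (left_mem_Icc.2 zero_le_one)).2.1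

structure IsCriticalOffspring (q : ℝ) (p : ℕ → ℝ) : Prop where
  q_pos : 0 < q
  nonneg : ∀ n, 0 ≤ p n
  summable_moment : Summable fun n : ℕ => (n + 1 : ℝ) * p n
  total : q + ∑' n, p n = 1
  mean : ∑' n : ℕ, (n + 1 : ℝ) * p n = 1

lemma phi_eq_add_mul_genFun (q : ℝ) (p : ℕ → ℝ) (x : ℝ) : phi q p x = q + x * genFun p x := by
  rw [phi, genFun, ← tsum_mul_left]
  congr 1
  exact tsum_congr fun n => by ring

noncomputable def psi (q : ℝ) (p : ℕ → ℝ) (x : ℝ) : ℝ := x / phi q p x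

noncomputable def lambdaDeriv (q : ℝ) (p : ℕ → ℝ) (x : ℝ) : ℝ :=
  1 + genFun (fun n => n * p n) x / (q + genFun p x) *
    (phi q p x / (q - x * genFun (fun n => n * p n) x))

lemma lambdaDeriv_zero (q : ℝ) (p : ℕ → ℝ) : lambdaDeriv q p 0 = 1 := by
  simp [lambdaDeriv, genFun_zero]

namespace IsCriticalOffspring

variable {q : ℝ} {p : ℕ → ℝ}

lemma natCast_mul_nonneg (hL : IsCriticalOffspring q p) (n : ℕ) : 0 ≤ (n : ℝ) * p n :=
  mul_nonneg n.cast_nonneg (hL.nonneg n)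

lemma summable (hL : IsCriticalOffspring q p) : Summable p :=
  hL.summable_moment.of_nonneg_of_le hL.nonneg fun n =>
    le_mul_of_one_le_left (hL.nonneg n) (by linarith [n.cast_nonneg (α := ℝ)])

lemma summable_natCast_mul (hL : IsCriticalOffspring q p) : Summable fun n : ℕ => n * p n :=
  hL.summable_moment.of_nonneg_of_le hL.natCast_mul_nonneg fun n =>
    mul_le_mul_of_nonneg_right (by linarith) (hL.nonneg n)

lemma tsum_natCast_mul (hL : IsCriticalOffspring q p) : ∑' n : ℕ, n * p n = q := by
  have hsplit : (fun n : ℕ => (n : ℝ) * p n) = fun n : ℕ => (n + 1 : ℝ) * p n - p n :=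
    funext fun n => by ring
  rw [hsplit, hL.summable_moment.tsum_sub hL.summable, hL.mean]
  linarith [hL.total]

lemma phi_one (hL : IsCriticalOffspring q p) : phi q p 1 = 1 := by
  simpa [phi] using hL.total

lemma phi_pos (hL : IsCriticalOffspring q p) {x : ℝ} (hx : 0 ≤ x) : 0 < phi q p x := by
  rw [phi_eq_add_mul_genFun]
  exact add_pos_of_pos_of_nonneg hL.q_pos (mul_nonneg hx (genFun_nonneg hL.nonneg hx))

lemma add_genFun_pos (hL : IsCriticalOffspring q p) {x : ℝ} (hx : 0 ≤ x) :
    0 < q + genFun p x :=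
  add_pos_of_pos_of_nonneg hL.q_pos (genFun_nonneg hL.nonneg hx)

lemma phi_mono (hL : IsCriticalOffspring q p) : MonotoneOn (phi q p) (Icc 0 1) := by
  intro x hx y hy hxy
  simp only [phi_eq_add_mul_genFun]
  exact add_le_add_right (mul_le_mul hxy (genFun_mono hL.nonneg hL.summable hx hy hxy)
    (genFun_nonneg hL.nonneg hx.1) hy.1) q

lemma continuousOn_phi (hL : IsCriticalOffspring q p) : ContinuousOn (phi q p) (Icc 0 1) := by
  simp only [funext (phi_eq_add_mul_genFun q p)]
  exact continuousOn_const.add (continuousOn_id.mul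
    ((continuousOn_genFun hL.nonneg hL.summable).mono (Icc_subset_Icc (by norm_num) le_rfl)))

lemma hasDerivAt_phi (hL : IsCriticalOffspring q p) {x : ℝ} (hx : x ∈ Ioo 0 1) :
    HasDerivAt (phi q p) (genFun p x + genFun (fun n => n * p n) x) x := by
  rw [funext (phi_eq_add_mul_genFun q p)]
  refine (((hasDerivAt_id' x).mul
    (hasDerivAt_genFun hL.nonneg hL.summable_natCast_mul hx)).const_add q).congr_deriv ?_
  rw [one_mul, mul_div_cancel₀ _ hx.1.ne']

lemma genFun_natCast_mul_le (hL : IsCriticalOffspring q p) {x : ℝ} (hx : x ∈ Icc 0 1) :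
    genFun (fun n => n * p n) x ≤ q := by
  have := genFun_mono hL.natCast_mul_nonneg hL.summable_natCast_mul hx
    (right_mem_Icc.mpr zero_le_one) hx.2
  rwa [genFun_one, hL.tsum_natCast_mul] at this

lemma genFun_natCast_mul_pos (hL : IsCriticalOffspring q p) {x : ℝ} (hx : x ∈ Ioc 0 1) :
    0 < genFun (fun n => n * p n) x :=
  genFun_pos hL.natCast_mul_nonneg hL.summable_natCast_mul (hL.tsum_natCast_mul ▸ hL.q_pos) hx

lemma sub_mul_genFun_natCast_mul_pos (hL : IsCriticalOffspring q p) {x : ℝ} (hx : x ∈ Ico 0 1) :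
    0 < q - x * genFun (fun n => n * p n) x := by
  have hB := hL.genFun_natCast_mul_le (Ico_subset_Icc_self hx)
  linarith [mul_le_mul_of_nonneg_left hB hx.1, mul_lt_of_lt_one_left hL.q_pos hx.2]

lemma hasDerivAt_psi (hL : IsCriticalOffspring q p) {x : ℝ} (hx : x ∈ Ioo 0 1) :
    HasDerivAt (psi q p) ((q - x * genFun (fun n => n * p n) x) / phi q p x ^ 2) x := by
  refine ((hasDerivAt_id' x).div (hL.hasDerivAt_phi hx) (hL.phi_pos hx.1.le).ne').congr_deriv ?_
  rw [phi_eq_add_mul_genFun]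
  ring

lemma continuousOn_psi (hL : IsCriticalOffspring q p) : ContinuousOn (psi q p) (Icc 0 1) :=
  continuousOn_id.div hL.continuousOn_phi fun _ hx => (hL.phi_pos hx.1).ne'

lemma strictMonoOn_psi (hL : IsCriticalOffspring q p) : StrictMonoOn (psi q p) (Icc 0 1) :=
  strictMonoOn_of_deriv_pos (convex_Icc 0 1) hL.continuousOn_psi fun x hx => by
    rw [interior_Icc] at hx
    rw [(hL.hasDerivAt_psi hx).deriv]
    exact div_pos (hL.sub_mul_genFun_natCast_mul_pos (Ioo_subset_Ico_self hx))
      (pow_pos (hL.phi_pos hx.1.le) 2)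

lemma psi_one (hL : IsCriticalOffspring q p) : psi q p 1 = 1 := by
  rw [psi, hL.phi_one, div_one]

lemma mapsTo_psi (hL : IsCriticalOffspring q p) : MapsTo (psi q p) (Icc 0 1) (Icc 0 1) :=
  fun _ hx => ⟨div_nonneg hx.1 (hL.phi_pos hx.1).le,
    hL.psi_one ▸ hL.strictMonoOn_psi.monotoneOn hx (right_mem_Icc.2 zero_le_one) hx.2⟩

variable {h : ℝ → ℝ}

lemma rightInvOn_psi (hL : IsCriticalOffspring q p) (hmin : IsMinimalSolution (phi q p) h) :
    RightInvOn h (psi q p) (Icc 0 1) := fun s hs => by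
  obtain ⟨hmem, hfix, -⟩ := hmin s hs
  rw [psi, div_eq_iff (hL.phi_pos hmem.1).ne']
  exact hfix

lemma continuousOn_minimalSolution (hL : IsCriticalOffspring q p)
    (hmin : IsMinimalSolution (phi q p) h) :
    ContinuousOn h (Icc 0 1) :=
  continuousOn_of_rightInvOn_strictMonoOn hL.strictMonoOn_psi hL.mapsTo_psi
    (fun s hs => (hmin s hs).1) (hL.rightInvOn_psi hmin)

lemma strictMonoOn_minimalSolution (hL : IsCriticalOffspring q p)
    (hmin : IsMinimalSolution (phi q p) h) :
    StrictMonoOn h (Icc 0 1) :=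
  strictMonoOn_of_rightInvOn hL.strictMonoOn_psi (fun s hs => (hmin s hs).1)
    (hL.rightInvOn_psi hmin)

lemma minimalSolution_one (hL : IsCriticalOffspring q p) (hmin : IsMinimalSolution (phi q p) h) :
    h 1 = 1 :=
  hL.strictMonoOn_psi.injOn (hmin 1 (right_mem_Icc.2 zero_le_one)).1 (right_mem_Icc.2 zero_le_one)
    ((hL.rightInvOn_psi hmin (right_mem_Icc.2 zero_le_one)).trans hL.psi_one.symm)

lemma mapsTo_minimalSolution_Ioo (hL : IsCriticalOffspring q p)
    (hmin : IsMinimalSolution (phi q p) h) :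
    MapsTo h (Ioo 0 1) (Ioo 0 1) := fun s hs => by
  have hmono := hL.strictMonoOn_minimalSolution hmin
  have h0 := hmono (left_mem_Icc.2 zero_le_one) (Ioo_subset_Icc_self hs) hs.1
  have h1 := hmono (Ioo_subset_Icc_self hs) (right_mem_Icc.2 zero_le_one) hs.2
  rw [hmin.apply_zero] at h0
  rw [hL.minimalSolution_one hmin] at h1
  exact ⟨h0, h1⟩

lemma hasDerivAt_minimalSolution (hL : IsCriticalOffspring q p)
    (hmin : IsMinimalSolution (phi q p) h) {s : ℝ} (hs : s ∈ Ioo 0 1) :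
    HasDerivAt h ((q - h s * genFun (fun n => n * p n) (h s)) / phi q p (h s) ^ 2)⁻¹ s := by
  have hx := hL.mapsTo_minimalSolution_Ioo hmin hs
  refine HasDerivAt.of_local_left_inverse
    ((hL.continuousOn_minimalSolution hmin).continuousAt (Icc_mem_nhds hs.1 hs.2))
    (hL.hasDerivAt_psi hx)
    (div_pos (hL.sub_mul_genFun_natCast_mul_pos (Ioo_subset_Ico_self hx))
      (pow_pos (hL.phi_pos hx.1.le) 2)).ne' ?_
  filter_upwards [Icc_mem_nhds hs.1 hs.2] with t ht using hL.rightInvOn_psi hmin ht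

lemma continuousOn_lambdaDeriv (hL : IsCriticalOffspring q p) :
    ContinuousOn (lambdaDeriv q p) (Ico 0 1) := by
  have hsub : Ico (0 : ℝ) 1 ⊆ Icc (-1) 1 := fun x hx => ⟨by linarith [hx.1], hx.2.le⟩
  have hg := (continuousOn_genFun hL.nonneg hL.summable).mono hsub
  have hB := (continuousOn_genFun hL.natCast_mul_nonneg hL.summable_natCast_mul).mono hsub
  refine continuousOn_const.add ((hB.div (continuousOn_const.add hg) fun x hx => ?_).mul
    ((hL.continuousOn_phi.mono Ico_subset_Icc_self).div (continuousOn_const.sub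
      (continuousOn_id.mul hB)) fun x hx => (hL.sub_mul_genFun_natCast_mul_pos hx).ne'))
  exact (hL.add_genFun_pos hx.1).ne'

lemma strictMonoOn_lambdaDeriv (hL : IsCriticalOffspring q p) :
    StrictMonoOn (lambdaDeriv q p) (Ioo 0 1) := by
  intro x hx y hy hxy
  set B := genFun (fun n => n * p n)
  have hBx := hL.genFun_natCast_mul_pos (Ioo_subset_Ioc_self hx)
  have hratio := monotoneOn_genFun_natCast_mul_div hL.nonneg hL.summable hL.summable_natCast_mul
    hL.q_pos (Ioo_subset_Icc_self hx) (Ioo_subset_Icc_self hy) hxy.le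
  have hratio_pos : 0 < B x / (q + genFun p x) := div_pos hBx (hL.add_genFun_pos hx.1.le)
  have hdx := hL.sub_mul_genFun_natCast_mul_pos (Ioo_subset_Ico_self hx)
  have hdy := hL.sub_mul_genFun_natCast_mul_pos (Ioo_subset_Ico_self hy)
  have hden : q - y * B y < q - x * B x := by
    have hB := genFun_mono hL.natCast_mul_nonneg hL.summable_natCast_mul
      (Ioo_subset_Icc_self hx) (Ioo_subset_Icc_self hy) hxy.le
    linarith [mul_lt_mul_of_pos_right hxy hBx, mul_le_mul_of_nonneg_left hB hy.1.le]
  have hphi := hL.phi_mono (Ioo_subset_Icc_self hx) (Ioo_subset_Icc_self hy) hxy.le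
  have hquot : phi q p x / (q - x * B x) < phi q p y / (q - y * B y) :=
    calc phi q p x / (q - x * B x) < phi q p x / (q - y * B y) :=
          div_lt_div_of_pos_left (hL.phi_pos hx.1.le) hdy hden
      _ ≤ phi q p y / (q - y * B y) := div_le_div_of_nonneg_right hphi hdy.le
  have hquot_pos : 0 < phi q p y / (q - y * B y) := div_pos (hL.phi_pos hy.1.le) hdy
  simp only [lambdaDeriv]
  gcongr 1 + ?_
  calc _ < B x / (q + genFun p x) * (phi q p y / (q - y * B y)) :=
        mul_lt_mul_of_pos_left hquot hratio_pos
    _ ≤ _ := mul_le_mul_of_nonneg_right hratio hquot_pos.le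

lemma tendsto_lambdaDeriv_nhdsLT_one (hL : IsCriticalOffspring q p) :
    Tendsto (lambdaDeriv q p) (𝓝[<] 1) atTop := by
  have hle : 𝓝[<] (1 : ℝ) ≤ 𝓝[Icc (-1) 1] 1 := nhdsWithin_le_of_mem (Icc_mem_nhdsLT (by norm_num))
  have hone : (1 : ℝ) ∈ Icc (-1) 1 := ⟨by norm_num, le_rfl⟩
  have hg : Tendsto (genFun p) (𝓝[<] 1) (𝓝 (1 - q)) := by
    have := ((continuousOn_genFun hL.nonneg hL.summable).continuousWithinAt hone).mono_left hle
    rwa [genFun_one, show ∑' n, p n = 1 - q by linarith [hL.total]] at this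
  have hB : Tendsto (genFun fun n => n * p n) (𝓝[<] 1) (𝓝 q) := by
    have := ((continuousOn_genFun hL.natCast_mul_nonneg hL.summable_natCast_mul).continuousWithinAt
      hone).mono_left hle
    rwa [genFun_one, hL.tsum_natCast_mul] at this
  have hphi : Tendsto (phi q p) (𝓝[<] 1) (𝓝 1) := by
    have := (hL.continuousOn_phi.continuousWithinAt (right_mem_Icc.2 zero_le_one)).mono_left
      (nhdsWithin_le_of_mem (Icc_mem_nhdsLT one_pos))
    rwa [hL.phi_one] at this
  have hden : Tendsto (fun x => q - x * genFun (fun n => n * p n) x) (𝓝[<] 1) (𝓝[>] 0) := by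
    refine tendsto_nhdsWithin_iff.mpr ⟨?_, ?_⟩
    · simpa using
        (tendsto_const_nhds (x := q)).sub ((tendsto_id.mono_left nhdsWithin_le_nhds).mul hB)
    · filter_upwards [Ioo_mem_nhdsLT zero_lt_one] with x hx
      exact hL.sub_mul_genFun_natCast_mul_pos (Ioo_subset_Ico_self hx)
  have hratio : Tendsto (fun x => genFun (fun n => n * p n) x / (q + genFun p x)) (𝓝[<] 1)
      (𝓝 q) := by
    have := hB.div ((tendsto_const_nhds (x := q)).add hg) (by simp)
    rwa [add_sub_cancel, div_one] at this
  refine tendsto_atTop_add_const_left _ 1 (hratio.pos_mul_atTop hL.q_pos ?_)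
  simpa only [div_eq_mul_inv, Function.comp_apply] using
    hphi.pos_mul_atTop one_pos (tendsto_inv_nhdsGT_zero.comp hden)

lemma LambdaR_eq (hL : IsCriticalOffspring q p) (hmin : IsMinimalSolution (phi q p) h) {l : ℝ}
    (hl : l < 0) : LambdaR q h l = l + log (q + genFun p (h (exp l))) := by
  have hs : exp l ∈ Ioo 0 1 := ⟨exp_pos l, exp_lt_one_iff.mpr hl⟩
  have hx := hL.mapsTo_minimalSolution_Ioo hmin hs
  have hpsi := hL.rightInvOn_psi hmin (Ioo_subset_Icc_self hs)
  set x := h (exp l)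
  have hA := hL.add_genFun_pos hx.1.le
  have harg : 1 + q * exp l - q * exp l / x = exp l * (q + genFun p x) := by
    rw [← hpsi, psi, phi_eq_add_mul_genFun]
    have hφ := phi_eq_add_mul_genFun q p x ▸ hL.phi_pos hx.1.le
    have := hx.1.ne'
    field_simp
    ring
  rw [LambdaR, if_pos hl, harg, log_mul (exp_pos l).ne' hA.ne', log_exp]

lemma hasDerivAt_LambdaR (hL : IsCriticalOffspring q p) (hmin : IsMinimalSolution (phi q p) h)
    {l : ℝ} (hl : l < 0) : HasDerivAt (LambdaR q h) (lambdaDeriv q p (h (exp l))) l := by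
  have hs : exp l ∈ Ioo 0 1 := ⟨exp_pos l, exp_lt_one_iff.mpr hl⟩
  have hx := hL.mapsTo_minimalSolution_Ioo hmin hs
  have hpsi := hL.rightInvOn_psi hmin (Ioo_subset_Icc_self hs)
  have hA := hL.add_genFun_pos hx.1.le
  have hsol := (hL.hasDerivAt_minimalSolution hmin hs).comp l (hasDerivAt_exp l)
  have hg := hasDerivAt_genFun hL.nonneg hL.summable_natCast_mul hx
  have hgsol := (hg.comp l hsol).const_add q
  have hderiv := (hasDerivAt_id' l).add (hgsol.log hA.ne')
  have heq : LambdaR q h =ᶠ[𝓝 l] fun t => t + log (q + genFun p (h (exp t))) := by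
    filter_upwards [Iio_mem_nhds hl] with t ht using hL.LambdaR_eq hmin ht
  refine (hderiv.congr_of_eventuallyEq heq).congr_deriv ?_
  simp only [Function.comp_apply]
  set x := h (exp l)
  rw [← hpsi, psi, lambdaDeriv]
  have hφ := hL.phi_pos hx.1.le
  have hden := hL.sub_mul_genFun_natCast_mul_pos (Ioo_subset_Ico_self hx)
  have := hx.1.ne'
  field_simp

lemma tendsto_lambdaDeriv_nhdsGT_zero (hL : IsCriticalOffspring q p) :
    Tendsto (lambdaDeriv q p) (𝓝[>] 0) (𝓝 1) := by
  have := (hL.continuousOn_lambdaDeriv.continuousWithinAt (left_mem_Ico.2 one_pos)).mono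
    Ioo_subset_Ico_self
  rwa [ContinuousWithinAt, nhdsWithin_Ioo_eq_nhdsGT one_pos, lambdaDeriv_zero] at this

lemma tendsto_minimalSolution_nhdsGT_zero (hL : IsCriticalOffspring q p)
    (hmin : IsMinimalSolution (phi q p) h) : Tendsto h (𝓝[>] 0) (𝓝[>] 0) := by
  have hc := (hL.continuousOn_minimalSolution hmin).continuousWithinAt (left_mem_Icc.2 zero_le_one)
  have := (hc.mono Ioo_subset_Icc_self).tendsto_nhdsWithin (hL.mapsTo_minimalSolution_Ioo hmin)
  rwa [hmin.apply_zero, nhdsWithin_Ioo_eq_nhdsGT one_pos] at this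

lemma tendsto_minimalSolution_nhdsLT_one (hL : IsCriticalOffspring q p)
    (hmin : IsMinimalSolution (phi q p) h) : Tendsto h (𝓝[<] 1) (𝓝[<] 1) := by
  have hc := (hL.continuousOn_minimalSolution hmin).continuousWithinAt (right_mem_Icc.2 zero_le_one)
  have := (hc.mono Ioo_subset_Icc_self).tendsto_nhdsWithin (hL.mapsTo_minimalSolution_Ioo hmin)
  rwa [hL.minimalSolution_one hmin, nhdsWithin_Ioo_eq_nhdsLT one_pos] at this

end IsCriticalOffspring

lemma Real.tendsto_exp_nhdsLT_zero : Tendsto exp (𝓝[<] 0) (𝓝[<] 1) := by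
  simpa using (continuous_exp.continuousWithinAt (s := Iio 0) (x := 0)).tendsto_nhdsWithin
    (t := Iio 1) fun _ hl => exp_lt_one_iff.mpr hl

theorem lambdaR_deriv_monotone_limits_general
    (q : ℝ) (p : ℕ → ℝ) (hq : 0 < q) (hp : ∀ n, 0 ≤ p n)
    (htotal : q + ∑' n : ℕ, p n = 1)
    (hmoment : Summable (fun n : ℕ => (n + 1 : ℝ) * p n))
    (hcrit : ∑' n : ℕ, (n + 1 : ℝ) * p n = 1)
    (h : ℝ → ℝ) (hmin : IsMinimalSolution (phi q p) h)
:
    DifferentiableOn ℝ (LambdaR q h) (Set.Iio 0) ∧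
    StrictMonoOn (deriv (LambdaR q h)) (Set.Iio 0) ∧
    Tendsto (deriv (LambdaR q h)) atBot (𝓝 1) ∧
    Tendsto (deriv (LambdaR q h)) (𝓝[<] (0 : ℝ)) atTop := by
  have hL : IsCriticalOffspring q p := ⟨hq, hp, hmoment, htotal, hcrit⟩
  have hderiv : ∀ l < 0, deriv (LambdaR q h) l = lambdaDeriv q p (h (exp l)) :=
    fun l hl => (hL.hasDerivAt_LambdaR hmin hl).deriv
  have hexp : ∀ l < 0, exp l ∈ Ioo 0 1 := fun l hl => ⟨exp_pos l, exp_lt_one_iff.mpr hl⟩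
  refine ⟨fun l hl => (hL.hasDerivAt_LambdaR hmin hl).differentiableAt.differentiableWithinAt,
    fun a ha b hb hab => ?_, ?_, ?_⟩
  · rw [hderiv a ha, hderiv b hb]
    exact hL.strictMonoOn_lambdaDeriv (hL.mapsTo_minimalSolution_Ioo hmin (hexp a ha))
      (hL.mapsTo_minimalSolution_Ioo hmin (hexp b hb)) (hL.strictMonoOn_minimalSolution hmin
        (Ioo_subset_Icc_self (hexp a ha)) (Ioo_subset_Icc_self (hexp b hb)) (exp_lt_exp.mpr hab))
  · refine ((hL.tendsto_lambdaDeriv_nhdsGT_zero.comp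
      (hL.tendsto_minimalSolution_nhdsGT_zero hmin)).comp tendsto_exp_atBot_nhdsGT).congr' ?_
    filter_upwards [eventually_lt_atBot 0] with l hl using (hderiv l hl).symm
  · refine ((hL.tendsto_lambdaDeriv_nhdsLT_one.comp
      (hL.tendsto_minimalSolution_nhdsLT_one hmin)).comp tendsto_exp_nhdsLT_zero).congr' ?_
    filter_upwards [self_mem_nhdsWithin] with l hl using (hderiv l hl).symm

/-- Lemma 5 for `Λ_r`: it is differentiable on `(−∞,0)`, its derivative is strictly
increasing there, and `Λ_r'(λ) → 1` as `λ → −∞` while `Λ_r'(λ) → +∞` as `λ → 0−`. -/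
theorem lambdaR_deriv_monotone_limits
    (q : ℝ) (p : ℕ → ℝ) (hq : 0 < q) (hp : ∀ n, 0 ≤ p n)
    (hpsum : Summable p) (htotal : q + ∑' n : ℕ, p n = 1) (hp0 : p 0 < 1)
    (hmoment : Summable (fun n : ℕ => (n + 1 : ℝ) * p n))
    (hcrit : ∑' n : ℕ, (n + 1 : ℝ) * p n = 1)
    (h : ℝ → ℝ) (hmin : IsMinimalSolution (phi q p) h)
:
    DifferentiableOn ℝ (LambdaR q h) (Set.Iio 0) ∧
    StrictMonoOn (deriv (LambdaR q h)) (Set.Iio 0) ∧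
    Tendsto (deriv (LambdaR q h)) atBot (𝓝 1) ∧
    Tendsto (deriv (LambdaR q h)) (𝓝[<] (0 : ℝ)) atTop :=
  lambdaR_deriv_monotone_limits_general q p hq hp htotal hmoment hcrit h hmin
end

section
/- Define f_0(s) = 1 + q·s − q·s/h(s) and P(s) = 1/(1 − f_0(s)) for s ∈ (0,1). Under Assumption (H), lim_{s→1−} P(s)·(1−s)^{1−α} = (1−α)·c/q. -/
open MeasureTheory ProbabilityTheory Filter Topology

open Set
lemma my_geom_le {x : ℝ} (hx0 : 0 ≤ x) (hx1 : x ≤ 1) (n : ℕ) :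
    1 - x ^ n ≤ (n : ℝ) * (1 - x) := by
  have h1 : (∑ i ∈ Finset.range n, x ^ i) * (1 - x) = 1 - x ^ n := by
    have := geom_sum_mul x n
    nlinarith [this]
  have h2 : (∑ i ∈ Finset.range n, x ^ i) ≤ (n : ℝ) := by
    calc (∑ i ∈ Finset.range n, x ^ i) ≤ ∑ i ∈ Finset.range n, (1:ℝ) := by
          apply Finset.sum_le_sum
          intro i _
          exact pow_le_one₀ hx0 hx1
      _ = (n : ℝ) := by simp
  nlinarith [sub_nonneg.2 hx1]

lemma my_geom_lt {x : ℝ} (hx0 : 0 ≤ x) (hx1 : x < 1) {n : ℕ} (hn : 2 ≤ n) :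
    1 - x ^ n < (n : ℝ) * (1 - x) := by
  have h1 : (∑ i ∈ Finset.range n, x ^ i) * (1 - x) = 1 - x ^ n := by
    have := geom_sum_mul x n
    nlinarith [this]
  have h2 : (∑ i ∈ Finset.range n, x ^ i) < (n : ℝ) := by
    calc (∑ i ∈ Finset.range n, x ^ i) < ∑ i ∈ Finset.range n, (1:ℝ) := by
          apply Finset.sum_lt_sum (fun i _ => pow_le_one₀ hx0 hx1.le)
          exact ⟨1, Finset.mem_range.2 (by omega), by simpa using hx1⟩
      _ = (n : ℝ) := by simp
  nlinarith [sub_pos.2 hx1]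


/-- Lemma 7, right continuous case: with `f₀(s) = 1 + q s − q s / h(s)` and
`P(s) = 1/(1 − f₀(s))`, under Assumption (H), `P(s)(1−s)^{1−α} → (1−α)c/q` as `s → 1−`. -/
theorem renewal_function_asymptotics_right
    (q : ℝ) (p : ℕ → ℝ) (hq : 0 < q) (hp : ∀ n, 0 ≤ p n)
    (hpsum : Summable p) (htotal : q + ∑' n : ℕ, p n = 1) (hp0 : p 0 < 1)
    (hmoment : Summable (fun n : ℕ => (n + 1 : ℝ) * p n))
    (hcrit : ∑' n : ℕ, (n + 1 : ℝ) * p n = 1)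
    (h : ℝ → ℝ) (hmin : IsMinimalSolution (phi q p) h)
    (α c : ℝ) (hα : α ∈ Set.Ioo (0 : ℝ) 1) (hc : 0 < c)
    (hH : Tendsto (fun s => (1 - s * phiDeriv p (h s)) / (1 - s) ^ α)
      (𝓝[<] (1 : ℝ)) (𝓝 c))
:
    Tendsto (fun s => 1 / (1 - (1 + q * s - q * s / h s)) * (1 - s) ^ (1 - α))
      (𝓝[<] (1 : ℝ)) (𝓝 ((1 - α) * c / q)) := by
  obtain ⟨hα0, hα1⟩ := hα
  -- summability facts
  have S1 : ∀ x : ℝ, 0 ≤ x → x ≤ 1 → Summable (fun n : ℕ => p n * x ^ (n + 1)) := by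
    intro x h0 h1
    refine Summable.of_nonneg_of_le (fun n => mul_nonneg (hp n) (pow_nonneg h0 _)) (fun n => ?_) hpsum
    exact mul_le_of_le_one_right (hp n) (pow_le_one₀ h0 h1)
  have S3 : Summable (fun n : ℕ => (n : ℝ) * p n) := by
    refine Summable.of_nonneg_of_le (fun n => mul_nonneg (Nat.cast_nonneg n) (hp n))
      (fun n => ?_) hmoment
    nlinarith [hp n, Nat.cast_nonneg (α := ℝ) n]
  have S4 : ∀ x : ℝ, 0 ≤ x → x ≤ 1 → Summable (fun n : ℕ => (n : ℝ) * p n * x ^ (n + 1)) := by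
    intro x h0 h1
    refine Summable.of_nonneg_of_le
      (fun n => mul_nonneg (mul_nonneg (Nat.cast_nonneg n) (hp n)) (pow_nonneg h0 _))
      (fun n => ?_) S3
    exact mul_le_of_le_one_right (mul_nonneg (Nat.cast_nonneg n) (hp n)) (pow_le_one₀ h0 h1)
  have hpsumval : ∑' n, p n = 1 - q := by linarith
  have hnpq : ∑' n : ℕ, (n : ℝ) * p n = q := by
    have h2 : ∑' n : ℕ, ((n : ℝ) * p n + p n) = (∑' n : ℕ, (n : ℝ) * p n) + ∑' n, p n :=
      Summable.tsum_add S3 hpsum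
    have h3 : ∑' n : ℕ, ((n : ℝ) * p n + p n) = 1 := by
      rw [← hcrit]; exact tsum_congr fun n => by ring
    rw [hpsumval] at h2
    linarith [h3 ▸ h2]
  have hn0 : ∃ m : ℕ, 1 ≤ m ∧ 0 < p m := by
    by_contra hcon
    push_neg at hcon
    have hz : ∀ m : ℕ, (m : ℝ) * p m = 0 := by
      intro m
      rcases Nat.eq_zero_or_pos m with hm | hm
      · simp [hm]
      · have := hcon m hm
        have := hp m
        have : p m = 0 := le_antisymm ‹p m ≤ 0› ‹0 ≤ p m›
        simp [this]
    rw [tsum_congr hz, tsum_zero] at hnpq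
    linarith
  obtain ⟨n₀, hn₀1, hpn₀⟩ := hn0
  -- φ basics
  have hφ1 : phi q p 1 = 1 := by
    have : ∑' n : ℕ, p n * (1:ℝ) ^ (n + 1) = ∑' n : ℕ, p n := tsum_congr fun n => by simp
    rw [phi, this]; exact htotal
  have hφ'1 : phiDeriv p 1 = 1 := by
    have : ∑' n : ℕ, (n + 1 : ℝ) * p n * (1:ℝ) ^ n = ∑' n : ℕ, (n + 1 : ℝ) * p n :=
      tsum_congr fun n => by simp
    rw [phiDeriv, this]; exact hcrit
  have hφ_pos : ∀ x ∈ Icc (0:ℝ) 1, 0 < phi q p x := by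
    intro x hx
    have h0 : 0 ≤ ∑' n : ℕ, p n * x ^ (n + 1) :=
      tsum_nonneg fun n => mul_nonneg (hp n) (pow_nonneg hx.1 _)
    rw [phi]; linarith
  have hφ_le_one : ∀ x ∈ Icc (0:ℝ) 1, phi q p x ≤ 1 := by
    intro x hx
    have h0 : ∑' n : ℕ, p n * x ^ (n + 1) ≤ ∑' n : ℕ, p n := by
      refine Summable.tsum_le_tsum (fun n => ?_) (S1 x hx.1 hx.2) hpsum
      exact mul_le_of_le_one_right (hp n) (pow_le_one₀ hx.1 hx.2)
    rw [phi]; linarith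
  have hφ_gt : ∀ x ∈ Ico (0:ℝ) 1, x < phi q p x := by
    intro x hx
    obtain ⟨hx0, hx1⟩ := hx
    have hlt : ∑' n : ℕ, p n * (1 - x ^ (n + 1)) <
        ∑' n : ℕ, (n + 1 : ℝ) * p n * (1 - x) := by
      refine Summable.tsum_lt_tsum_of_nonneg (i := n₀)
        (fun n => mul_nonneg (hp n) (by nlinarith [pow_le_one₀ hx0 hx1.le (n := n+1)]))
        (fun n => ?_) ?_ (hmoment.mul_right (1 - x))
      · have hb := my_geom_le hx0 hx1.le (n + 1)
        have := hp n
        push_cast at hb ⊢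
        nlinarith
      · have hb := my_geom_lt hx0 hx1 (n := n₀ + 1) (by omega)
        push_cast at hb ⊢
        nlinarith
    have hsg : ∑' n : ℕ, (n + 1 : ℝ) * p n * (1 - x) = 1 - x := by
      rw [tsum_mul_right, hcrit, one_mul]
    have hsf : ∑' n : ℕ, p n * (1 - x ^ (n + 1)) =
        (1 - q) - ∑' n : ℕ, p n * x ^ (n + 1) := by
      have hsub : ∑' n : ℕ, (p n - p n * x ^ (n + 1)) =
          (∑' n : ℕ, p n) - ∑' n : ℕ, p n * x ^ (n + 1) :=
        Summable.tsum_sub hpsum (S1 x hx0 hx1.le)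
      rw [show (fun n : ℕ => p n * (1 - x ^ (n + 1))) = fun n : ℕ => p n - p n * x ^ (n + 1)
        from funext fun n => by ring, hsub, hpsumval]
    rw [phi]
    rw [hsf, hsg] at hlt
    linarith
  -- derivative of φ
  have hderiv : ∀ x ∈ Ioo (-1:ℝ) 1, HasDerivAt (phi q p) (phiDeriv p x) x := by
    intro x hx
    have hball : Metric.ball (0:ℝ) 1 = Ioo (-1:ℝ) 1 := by
      rw [Real.ball_eq_Ioo]; norm_num
    have main : HasDerivAt (fun z : ℝ => ∑' n : ℕ, p n * z ^ (n + 1))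
        (∑' n : ℕ, (n + 1 : ℝ) * p n * x ^ n) x := by
      refine hasDerivAt_tsum_of_isPreconnected hmoment Metric.isOpen_ball
        (convex_ball _ _).isPreconnected
        (g := fun (n : ℕ) (z : ℝ) => p n * z ^ (n + 1))
        (g' := fun (n : ℕ) (z : ℝ) => (n + 1 : ℝ) * p n * z ^ n)
        (fun n z _ => ?_) (fun n z hz => ?_) (by simp [hball] : (0:ℝ) ∈ Metric.ball (0:ℝ) 1)
        (by simpa using summable_zero) (by rw [hball]; exact hx)
      · have := (hasDerivAt_pow (n + 1) z).const_mul (p n)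
        convert this using 1
        · rfl
        push_cast
        ring
      · rw [hball] at hz
        have hz1 : |z| ≤ 1 := by
          rw [abs_le]; exact ⟨hz.1.le, hz.2.le⟩
        have hzn : ‖z ^ n‖ ≤ 1 := by
          rw [Real.norm_eq_abs, abs_pow]
          exact pow_le_one₀ (abs_nonneg z) hz1
        have hnp : (0:ℝ) ≤ ((n:ℝ) + 1) * p n := mul_nonneg (by positivity) (hp n)
        calc ‖(n + 1 : ℝ) * p n * z ^ n‖ = ((n:ℝ) + 1) * p n * ‖z ^ n‖ := by
              rw [norm_mul, Real.norm_eq_abs (((n:ℝ)+1) * p n), abs_of_nonneg hnp]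
          _ ≤ ((n:ℝ) + 1) * p n * 1 := mul_le_mul_of_nonneg_left hzn hnp
          _ = (n + 1 : ℝ) * p n := by ring
    have : HasDerivAt (fun z : ℝ => q + ∑' n : ℕ, p n * z ^ (n + 1))
        (∑' n : ℕ, (n + 1 : ℝ) * p n * x ^ n) x := main.const_add q
    exact this
  -- σ and its properties
  set σ : ℝ → ℝ := fun x => x / phi q p x with hσdef
  have hA : ∀ x ∈ Ico (0:ℝ) 1, x * phiDeriv p x < phi q p x := by
    intro x hx
    obtain ⟨hx0, hx1⟩ := hx
    have h1 : x * phiDeriv p x = ∑' n : ℕ, (n + 1 : ℝ) * p n * x ^ (n + 1) := by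
      rw [phiDeriv, ← tsum_mul_left]
      exact tsum_congr fun n => by ring
    have split : ∑' n : ℕ, (n + 1 : ℝ) * p n * x ^ (n + 1) =
        (∑' n : ℕ, (n : ℝ) * p n * x ^ (n + 1)) + ∑' n : ℕ, p n * x ^ (n + 1) := by
      rw [← Summable.tsum_add (S4 x hx0 hx1.le) (S1 x hx0 hx1.le)]
      exact tsum_congr fun n => by ring
    have hlt : ∑' n : ℕ, (n : ℝ) * p n * x ^ (n + 1) < q := by
      rw [← hnpq]
      refine Summable.tsum_lt_tsum_of_nonneg (i := n₀)
        (fun n => mul_nonneg (mul_nonneg (Nat.cast_nonneg n) (hp n)) (pow_nonneg hx0 _))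
        (fun n => mul_le_of_le_one_right (mul_nonneg (Nat.cast_nonneg n) (hp n))
          (pow_le_one₀ hx0 hx1.le)) ?_ S3
      have hpow : x ^ (n₀ + 1) < 1 := pow_lt_one₀ hx0 hx1 (by omega)
      have hn₀pos : (0:ℝ) < (n₀ : ℝ) * p n₀ := by
        have : (1:ℝ) ≤ (n₀ : ℝ) := by exact_mod_cast hn₀1
        nlinarith
      nlinarith [pow_nonneg hx0 (n₀ + 1)]
    rw [h1, split, phi]
    linarith
  have hσderiv : ∀ x ∈ Ioo (0:ℝ) 1, HasDerivAt σ
      ((phi q p x - x * phiDeriv p x) / (phi q p x) ^ 2) x := by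
    intro x hx
    have hxI : x ∈ Ioo (-1:ℝ) 1 := ⟨by linarith [hx.1], hx.2⟩
    have hφx : phi q p x ≠ 0 := ne_of_gt (hφ_pos x ⟨hx.1.le, hx.2.le⟩)
    have := (hasDerivAt_id x).div (hderiv x hxI) hφx
    simpa [hσdef, Pi.div_def] using this
  have hσ_lt_one : ∀ x ∈ Ico (0:ℝ) 1, σ x < 1 := by
    intro x hx
    rw [hσdef]
    exact (div_lt_one (hφ_pos x ⟨hx.1, hx.2.le⟩)).2 (hφ_gt x hx)
  have hσ_nonneg : ∀ x ∈ Icc (0:ℝ) 1, 0 ≤ σ x := by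
    intro x hx
    exact div_nonneg hx.1 (hφ_pos x hx).le
  have hσ_mono : StrictMonoOn σ (Ico (0:ℝ) 1) := by
    apply strictMonoOn_of_deriv_pos (convex_Ico 0 1)
    · intro x hx
      have hxI : x ∈ Ioo (-1:ℝ) 1 := ⟨by linarith [hx.1], hx.2⟩
      have hφx : phi q p x ≠ 0 := ne_of_gt (hφ_pos x ⟨hx.1, hx.2.le⟩)
      exact (ContinuousAt.div continuousAt_id (hderiv x hxI).continuousAt
        hφx).continuousWithinAt
    · intro x hx
      rw [interior_Ico] at hx
      rw [(hσderiv x hx).deriv]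
      have h1 := hA x ⟨hx.1.le, hx.2⟩
      have h2 := hφ_pos x ⟨hx.1.le, hx.2.le⟩
      exact div_pos (by linarith) (by positivity)
  have hinv : ∀ x ∈ Ioo (0:ℝ) 1, h (σ x) = x := by
    intro x hx
    have hφx := hφ_pos x ⟨hx.1.le, hx.2.le⟩
    have hσx : σ x ∈ Icc (0:ℝ) 1 :=
      ⟨hσ_nonneg x ⟨hx.1.le, hx.2.le⟩, (hσ_lt_one x ⟨hx.1.le, hx.2⟩).le⟩
    obtain ⟨hmem, hfix, hminty⟩ := hmin (σ x) hσx
    have hxfix : x = σ x * phi q p x := by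
      rw [hσdef]
      field_simp
    have hle : h (σ x) ≤ x := hminty x ⟨hx.1.le, hx.2.le⟩ hxfix
    rcases eq_or_lt_of_le hle with heq | hlt
    · exact heq
    · exfalso
      have hφy := hφ_pos _ hmem
      have hσy : σ (h (σ x)) = σ x := by
        rw [hσdef]
        exact (div_eq_iff (ne_of_gt hφy)).2 hfix
      have : σ (h (σ x)) < σ x :=
        hσ_mono ⟨hmem.1, lt_trans hlt hx.2⟩ ⟨hx.1.le, hx.2⟩ hlt
      rw [hσy] at this
      exact lt_irrefl _ this
  have hσ_of_h : ∀ s ∈ Ico (0:ℝ) 1, σ (h s) = s ∧ h s ∈ Ico (0:ℝ) 1 := by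
    intro s hs
    obtain ⟨hmem, hfix, _⟩ := hmin s ⟨hs.1, hs.2.le⟩
    have hφh : 0 < phi q p (h s) := hφ_pos _ hmem
    have hσh : σ (h s) = s := by
      rw [hσdef]
      exact (div_eq_iff (ne_of_gt hφh)).2 hfix
    have hne : h s ≠ 1 := by
      intro he
      rw [he, hφ1, mul_one] at hfix
      exact absurd hfix.symm (ne_of_lt hs.2)
    exact ⟨hσh, ⟨hmem.1, lt_of_le_of_ne hmem.2 hne⟩⟩
  have hIoo : Ioo (0:ℝ) 1 ∈ 𝓝[<] (1:ℝ) := Ioo_mem_nhdsLT_of_mem ⟨zero_lt_one, le_refl 1⟩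
  -- limit of h
  have hhlim : Tendsto h (𝓝[<] (1:ℝ)) (𝓝[<] (1:ℝ)) := by
    rw [tendsto_nhdsWithin_iff]
    constructor
    · rw [tendsto_order]
      constructor
      · intro b hb
        set b' : ℝ := max b 0 with hb'def
        have hb'1 : b' < 1 := max_lt hb zero_lt_one
        have hb'0 : 0 ≤ b' := le_max_right b 0
        have hσb' : σ b' < 1 := hσ_lt_one b' ⟨hb'0, hb'1⟩
        have hσb'0 : 0 ≤ σ b' := hσ_nonneg b' ⟨hb'0, hb'1.le⟩
        filter_upwards [Ioo_mem_nhdsLT_of_mem (show (1:ℝ) ∈ Ioc (σ b') 1 from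
          ⟨hσb', le_refl 1⟩)] with s hs
        have hsI : s ∈ Ico (0:ℝ) 1 := ⟨le_trans hσb'0 hs.1.le, hs.2⟩
        obtain ⟨hσh, hhmem⟩ := hσ_of_h s hsI
        by_contra hle'
        push_neg at hle'
        have hh_le : h s ≤ b' := le_max_of_le_left hle'
        have : σ (h s) ≤ σ b' :=
          hσ_mono.monotoneOn hhmem ⟨hb'0, hb'1⟩ hh_le
        rw [hσh] at this
        exact absurd hs.1 (not_lt.2 this)
      · intro b hb
        filter_upwards [hIoo] with s hs
        obtain ⟨hmem, _, _⟩ := hmin s ⟨hs.1.le, hs.2.le⟩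
        exact lt_of_le_of_lt hmem.2 hb
    · filter_upwards [hIoo] with s hs
      exact (hσ_of_h s ⟨hs.1.le, hs.2⟩).2.2
  -- limit of σ
  have hσlim : Tendsto σ (𝓝[<] (1:ℝ)) (𝓝[<] (1:ℝ)) := by
    rw [tendsto_nhdsWithin_iff]
    constructor
    · apply tendsto_of_tendsto_of_tendsto_of_le_of_le'
        (tendsto_id.mono_left nhdsWithin_le_nhds) tendsto_const_nhds
      · filter_upwards [hIoo] with x hx
        have hφx := hφ_pos x ⟨hx.1.le, hx.2.le⟩
        rw [hσdef]
        rw [le_div_iff₀ hφx]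
        exact mul_le_of_le_one_right hx.1.le (hφ_le_one x ⟨hx.1.le, hx.2.le⟩)
      · filter_upwards [hIoo] with x hx
        exact (hσ_lt_one x ⟨hx.1.le, hx.2⟩).le
    · filter_upwards [hIoo] with x hx
      exact hσ_lt_one x ⟨hx.1.le, hx.2⟩
  have hσlim' : Tendsto σ (𝓝[<] (1:ℝ)) (𝓝 (1:ℝ)) := hσlim.mono_right nhdsWithin_le_nhds
  -- limit of φ
  have hφlim : Tendsto (fun x => phi q p x) (𝓝[<] (1:ℝ)) (𝓝 (1:ℝ)) := by
    apply tendsto_of_tendsto_of_tendsto_of_le_of_le'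
      (tendsto_id.mono_left nhdsWithin_le_nhds) tendsto_const_nhds
    · filter_upwards [hIoo] with x hx
      exact (hφ_gt x ⟨hx.1.le, hx.2⟩).le
    · filter_upwards [hIoo] with x hx
      exact hφ_le_one x ⟨hx.1.le, hx.2.le⟩
  -- transported hypothesis (H)
  have Htd : Tendsto (fun x => (1 - σ x * phiDeriv p x) / (1 - σ x) ^ α)
      (𝓝[<] (1:ℝ)) (𝓝 c) := by
    refine (hH.comp hσlim).congr' ?_
    filter_upwards [hIoo] with x hx
    simp only [Function.comp]
    rw [hinv x hx]
  -- the key limit via L'Hopital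
  have hd_pos : ∀ x ∈ Ioo (0:ℝ) 1, 0 < 1 - σ x := fun x hx =>
    sub_pos.2 (hσ_lt_one x ⟨hx.1.le, hx.2⟩)
  have hKey : Tendsto (fun x => (1 - σ x) ^ (1 - α) / (1 - x)) (𝓝[<] (1:ℝ))
      (𝓝 ((1 - α) * c)) := by
    refine HasDerivAt.lhopital_zero_nhdsLT
      (f := fun x => (1 - σ x) ^ (1 - α)) (g := fun x => 1 - x)
      (f' := fun x => -((phi q p x - x * phiDeriv p x) / (phi q p x) ^ 2) * (1 - α) *
        (1 - σ x) ^ (1 - α - 1))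
      (g' := fun _ => (-1 : ℝ)) ?_ ?_ ?_ ?_ ?_ ?_
    · filter_upwards [hIoo] with x hx
      have h1 := (hσderiv x hx).const_sub 1
      exact h1.rpow_const (Or.inl (ne_of_gt (hd_pos x hx)))
    · filter_upwards with x
      simpa using (hasDerivAt_id x).const_sub 1
    · filter_upwards with x
      norm_num
    · have h0 : Tendsto (fun x => 1 - σ x) (𝓝[<] (1:ℝ)) (𝓝 0) := by
        have := (tendsto_const_nhds (x := (1:ℝ)) (f := 𝓝[<] (1:ℝ))).sub hσlim'
        simpa using this
      have hcont := (Real.continuousAt_rpow_const 0 (1 - α) (Or.inr (by linarith))).tendsto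
      have hcomp := hcont.comp h0
      rwa [Real.zero_rpow (ne_of_gt (by linarith : (0:ℝ) < 1 - α))] at hcomp
    · have := (tendsto_const_nhds (x := (1:ℝ)) (f := 𝓝[<] (1:ℝ))).sub
        (tendsto_id.mono_left nhdsWithin_le_nhds : Tendsto id (𝓝[<] (1:ℝ)) (𝓝 1))
      simpa using this
    · have hmain : Tendsto (fun x => (1 - α) * (((1 - σ x * phiDeriv p x) / (1 - σ x) ^ α) *
          (phi q p x)⁻¹)) (𝓝[<] (1:ℝ)) (𝓝 ((1 - α) * (c * (1:ℝ)⁻¹))) :=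
        (Htd.mul (hφlim.inv₀ one_ne_zero)).const_mul (1 - α)
      rw [show (1 - α) * (c * (1:ℝ)⁻¹) = (1 - α) * c by norm_num] at hmain
      refine hmain.congr' ?_
      filter_upwards [hIoo] with x hx
      have hφx := hφ_pos x ⟨hx.1.le, hx.2.le⟩
      have hdx := hd_pos x hx
      have hdα : (0:ℝ) < (1 - σ x) ^ α := Real.rpow_pos_of_pos hdx α
      have hrw : (1 - σ x) ^ (1 - α - 1 : ℝ) = ((1 - σ x) ^ α)⁻¹ := by
        rw [show (1 - α - 1 : ℝ) = -α by ring, Real.rpow_neg hdx.le]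
      have h2 : 1 - σ x * phiDeriv p x =
          (phi q p x - x * phiDeriv p x) / phi q p x := by
        rw [hσdef]
        field_simp
      rw [hrw, h2]
      set D := (1 - σ x) ^ α with hD
      field_simp
  -- final assembly
  have hGlim : Tendsto (fun x => x / (q * σ x) * ((1 - σ x) ^ (1 - α) / (1 - x)))
      (𝓝[<] (1:ℝ)) (𝓝 ((1 - α) * c / q)) := by
    have h1 : Tendsto (fun x => x / (q * σ x)) (𝓝[<] (1:ℝ)) (𝓝 (1 / (q * 1))) :=
      Tendsto.div (tendsto_id.mono_left nhdsWithin_le_nhds)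
        (tendsto_const_nhds.mul hσlim') (by simp [hq.ne'])
    have hmul := h1.mul hKey
    rwa [show 1 / (q * 1) * ((1 - α) * c) = (1 - α) * c / q by field_simp] at hmul
  refine (hGlim.comp hhlim).congr' ?_
  filter_upwards [hIoo] with s hs
  obtain ⟨hσh, hhmem⟩ := hσ_of_h s ⟨hs.1.le, hs.2⟩
  obtain ⟨hmem, hfix, _⟩ := hmin s ⟨hs.1.le, hs.2.le⟩
  have hφh := hφ_pos _ hmem
  have h0 : 0 < h s := by
    rw [hfix]
    exact mul_pos hs.1 hφh
  have h1' : h s < 1 := hhmem.2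
  simp only [Function.comp]
  rw [hσh]
  have hd : 1 - (1 + q * s - q * s / h s) = q * s * (1 - h s) / h s := by
    field_simp
    ring
  rw [hd]
  have hs0 : s ≠ 0 := ne_of_gt hs.1
  have hh0 : h s ≠ 0 := ne_of_gt h0
  have hh1 : (1 : ℝ) - h s ≠ 0 := ne_of_gt (sub_pos.2 h1')
  set A := (1 - s) ^ (1 - α : ℝ) with hA
  field_simp
end
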